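/- There exists a finite connected shape S ⊆ ℤ² such that S weakly self-assembles in some singly seeded RTAM system, but there is no singly seeded RTAM system in which S strictly self-assembles. -/

import Mathlib

/-! # Reflexive Tile Assembly Model (RTAM) -/

/-- A glue: `none` is the null glue; `some (l, s)` has label `l : ℤ` and strength `s : ℕ`.
The complement of the label `l` is `-l`. -/
abbrev Glue : Type := Option (ℤ × ℕ)

/-- Strength with which two abutting glues bind: `s` if the labels are complementary and
the strengths are both equal to `s`, and `0` otherwise. -/
def glueBind : Glue → Glue → ℕ
  | some (l₁, s₁), some (l₂, s₂) => if l₂ = -l₁ ∧ s₂ = s₁ then s₁ else 0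
  | _, _ => 0

/-- Two abutting glues match (for mismatch-freeness): both null, or complementary labels
with equal strengths. -/
def GlueMatch (g h : Glue) : Prop :=
  (g = none ∧ h = none) ∨ ∃ l s, g = some (l, s) ∧ h = some (-l, s)

/-- A tile type: glues on the north, east, south and west sides (in that order). -/
abbrev TileType : Type := Glue × Glue × Glue × Glue

def TileType.north (t : TileType) : Glue := t.1
def TileType.east (t : TileType) : Glue := t.2.1
def TileType.south (t : TileType) : Glue := t.2.2.1
def TileType.west (t : TileType) : Glue := t.2.2.2

/-- A reflection `(h, v)`: `h` indicates a flip across the vertical axis (swapping east and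
west and negating `x`), `v` a flip across the horizontal axis (swapping north and south and
negating `y`).  `D = (false, false)`, `H = (true, false)`, `V = (false, true)`,
`B = (true, true)`. -/
abbrev Reflection : Type := Bool × Bool

/-- Composition of reflections (the Klein four-group). -/
def Reflection.comp (r s : Reflection) : Reflection := (xor r.1 s.1, xor r.2 s.2)

/-- The action of a reflection on a point of `ℤ²`. -/
def Reflection.onPoint (r : Reflection) (p : ℤ × ℤ) : ℤ × ℤ :=
  (if r.1 then -p.1 else p.1, if r.2 then -p.2 else p.2)

/-- The tile type obtained by reflecting `t` according to `r` (glues are unchanged, sides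
are permuted). -/
def TileType.reflect (t : TileType) (r : Reflection) : TileType :=
  (if r.2 then TileType.south t else TileType.north t,
   if r.1 then TileType.west t else TileType.east t,
   if r.2 then TileType.north t else TileType.south t,
   if r.1 then TileType.east t else TileType.west t)

/-- A placed tile: a tile type together with its reflection. -/
abbrev Placement : Type := TileType × Reflection

/-- An assembly: a partial function from `ℤ²` to placed tiles. -/
abbrev Assembly : Type := ℤ × ℤ → Option Placement

/-- The domain of an assembly. -/
def adom (α : Assembly) : Set (ℤ × ℤ) := {p | α p ≠ none}

/-- The glue presented by the placed tile `pl` at position `p` on the side facing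
position `q` (the null glue if `q` is not adjacent to `p`). -/
def facingGlue (pl : Placement) (p q : ℤ × ℤ) : Glue :=
  if q = (p.1 + 1, p.2) then TileType.east (TileType.reflect pl.1 pl.2)
  else if q = (p.1 - 1, p.2) then TileType.west (TileType.reflect pl.1 pl.2)
  else if q = (p.1, p.2 + 1) then TileType.north (TileType.reflect pl.1 pl.2)
  else if q = (p.1, p.2 - 1) then TileType.south (TileType.reflect pl.1 pl.2)
  else none

/-- The strength of the bond between the tiles of `α` at positions `p` and `q`. -/
def bondStrength (α : Assembly) (p q : ℤ × ℤ) : ℕ :=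
  match α p, α q with
  | some a, some b => glueBind (facingGlue a p q) (facingGlue b q p)
  | _, _ => 0

/-- Adjacency in the binding graph of `α`. -/
def BondAdj (α : Assembly) (p q : ℤ × ℤ) : Prop := 0 < bondStrength α p q

/-- `α` is `τ`-stable: every cut of its binding graph has total strength at least `τ`
(i.e. some finite set of crossing edges already has total strength at least `τ`). -/
def Stable (α : Assembly) (τ : ℕ) : Prop :=
  ∀ A : Set (ℤ × ℤ), A ⊆ adom α → A.Nonempty → (adom α \ A).Nonempty →
    ∃ E : Finset ((ℤ × ℤ) × (ℤ × ℤ)),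
      (∀ e ∈ E, e.1 ∈ A ∧ e.2 ∈ adom α \ A) ∧
      τ ≤ ∑ e ∈ E, bondStrength α e.1 e.2

/-- An RTAM tile assembly system: a finite tile set, a finite stable seed assembly, and a
temperature. -/
structure RTAS where
  tiles : Finset TileType
  seed : Assembly
  temp : ℕ
  seed_nonempty : (adom seed).Nonempty
  seed_finite : (adom seed).Finite
  seed_tiles : ∀ p pl, seed p = some pl → pl.1 ∈ tiles
  seed_stable : Stable seed temp

/-- `β` is obtained from `α` by `τ`-stably attaching a single tile (in any reflection) at
an empty position. -/
def Attaches (S : RTAS) (α β : Assembly) : Prop :=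
  ∃ (p : ℤ × ℤ) (t : TileType) (r : Reflection),
    α p = none ∧ t ∈ S.tiles ∧ β = Function.update α p (some (t, r)) ∧ Stable β S.temp

/-- Producible assemblies: those reachable from the seed in finitely many attachment steps
or in the limit. -/
def Producible (S : RTAS) (α : Assembly) : Prop :=
  ∃ f : ℕ → Assembly, f 0 = S.seed ∧
    (∀ n, f (n + 1) = f n ∨ Attaches S (f n) (f (n + 1))) ∧
    (∀ p pl, α p = some pl ↔ ∃ n, f n p = some pl)

/-- Terminal assemblies: producible assemblies admitting no further attachment. -/
def Terminal (S : RTAS) (α : Assembly) : Prop :=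
  Producible S α ∧ ∀ β, ¬ Attaches S α β

/-- Apply the reflection `r` and then the translation `v` to the assembly `α`. -/
def transform (α : Assembly) (r : Reflection) (v : ℤ × ℤ) : Assembly :=
  fun p => (α (Reflection.onPoint r (p - v))).map fun pl => (pl.1, Reflection.comp r pl.2)

/-- The configuration of an assembly: forget the reflections of the placed tiles. -/
def config (α : Assembly) : ℤ × ℤ → Option TileType := fun p => (α p).map Prod.fst

/-- A system is directed if any two producible assemblies have the same configuration up
to a reflection and a translation. -/
def RTASDirected (S : RTAS) : Prop :=
  ∀ α β, Producible S α → Producible S β →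
    ∃ (r : Reflection) (v : ℤ × ℤ), config (transform β r v) = config α

/-- A system is singly seeded if its seed consists of a single tile. -/
def SinglySeeded (S : RTAS) : Prop := ∃ p, adom S.seed = {p}

/-- `X` weakly self-assembles in `S`. -/
def WeaklySelfAssembles (S : RTAS) (X : Set (ℤ × ℤ)) : Prop :=
  ∃ B ⊆ S.tiles, ∀ α, Terminal S α →
    ∃ (r : Reflection) (v : ℤ × ℤ),
      {p | ∃ pl, transform α r v p = some pl ∧ pl.1 ∈ B} = X

/-- `X` strictly self-assembles in `S`. -/
def StrictlySelfAssembles (S : RTAS) (X : Set (ℤ × ℤ)) : Prop :=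
  ∀ α, Terminal S α →
    ∃ (r : Reflection) (v : ℤ × ℤ), adom (transform α r v) = X

/-- A semi-doubly periodic subset of `ℤ²`. -/
def SemiDoublyPeriodic (X : Set (ℤ × ℤ)) : Prop :=
  ∃ b u v : ℤ × ℤ, X = {p | ∃ n m : ℕ, p = b + (n : ℤ) • u + (m : ℤ) • v}

/-- A finite union of semi-doubly periodic sets. -/
def FiniteUnionSDP (X : Set (ℤ × ℤ)) : Prop :=
  ∃ (k : ℕ) (f : Fin k → Set (ℤ × ℤ)),
    (∀ i, SemiDoublyPeriodic (f i)) ∧ X = ⋃ i, f i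

/-- The box of radius `c` centered at `v`. -/
def box (c : ℕ) (v : ℤ × ℤ) : Set (ℤ × ℤ) :=
  {p | |p.1 - v.1| ≤ (c : ℤ) ∧ |p.2 - v.2| ≤ (c : ℤ)}

/-- The `n × m` rectangle `{0, …, n−1} × {0, …, m−1} ⊆ ℤ²`. -/
def rectShape (n m : ℕ) : Set (ℤ × ℤ) :=
  {p | 0 ≤ p.1 ∧ p.1 < (n : ℤ) ∧ 0 ≤ p.2 ∧ p.2 < (m : ℤ)}

/-- The `n × n` square `{0, …, n−1}² ⊆ ℤ²`. -/
def squareShape (n : ℕ) : Set (ℤ × ℤ) := rectShape n n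

/-- Grid adjacency on `ℤ²`. -/
def GridAdj (p q : ℤ × ℤ) : Prop := (p.1 - q.1).natAbs + (p.2 - q.2).natAbs = 1

/-- `X` is connected in the grid graph. -/
def GridConnectedOn (X : Set (ℤ × ℤ)) : Prop :=
  ∀ p ∈ X, ∀ q ∈ X, Relation.ReflTransGen (fun a b => GridAdj a b ∧ a ∈ X ∧ b ∈ X) p q

/-- A shape: a finite nonempty connected subset of `ℤ²`. -/
def IsShape (X : Set (ℤ × ℤ)) : Prop := X.Finite ∧ X.Nonempty ∧ GridConnectedOn X

/-- A system is mismatch-free: in every producible assembly, abutting sides of adjacent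
tiles are either both null or carry complementary glues of equal strength. -/
def MismatchFree (S : RTAS) : Prop :=
  ∀ α, Producible S α → ∀ p q a b, GridAdj p q → α p = some a → α q = some b →
    GlueMatch (facingGlue a p q) (facingGlue b q p)

/-- `X` is odd-symmetric with respect to some horizontal or vertical line through lattice
points. -/
def OddSymmetric (X : Set (ℤ × ℤ)) : Prop :=
  (∃ l : ℤ, ∀ a b : ℤ, ((a, l - b) ∈ X ↔ (a, l + b) ∈ X)) ∨
  (∃ l : ℤ, ∀ a b : ℤ, ((l - a, b) ∈ X ↔ (l + a, b) ∈ X))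

/-- The binding graph of `α` is a tree: connected on `adom α` and every edge is a bridge. -/
def BindingGraphIsTree (α : Assembly) : Prop :=
  (∀ p ∈ adom α, ∀ q ∈ adom α, Relation.ReflTransGen (BondAdj α) p q) ∧
  (∀ p q, BondAdj α p q →
    ¬ Relation.ReflTransGen
      (fun a b => BondAdj α a b ∧ ¬((a = p ∧ b = q) ∨ (a = q ∧ b = p))) p q)

/-- A spanning tree of the grid graph of a shape `X`. -/
structure TreeOf (X : Set (ℤ × ℤ)) where
  adj : ℤ × ℤ → ℤ × ℤ → Prop
  symm : ∀ p q, adj p q → adj q p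
  valid : ∀ p q, adj p q → p ∈ X ∧ q ∈ X ∧ GridAdj p q
  connected : ∀ p ∈ X, ∀ q ∈ X, Relation.ReflTransGen adj p q
  acyclic : ∀ p q, adj p q →
    ¬ Relation.ReflTransGen
      (fun a b => adj a b ∧ ¬((a = p ∧ b = q) ∨ (a = q ∧ b = p))) p q

/-- The vertex set of a horizontal axis at height `l` from `x₁` to `x₂`. -/
def hAxisSet (l x₁ x₂ : ℤ) : Set (ℤ × ℤ) := {p | p.2 = l ∧ x₁ ≤ p.1 ∧ p.1 ≤ x₂}

/-- The vertex set of a vertical axis at abscissa `l` from `y₁` to `y₂`. -/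
def vAxisSet (l y₁ y₂ : ℤ) : Set (ℤ × ℤ) := {p | p.1 = l ∧ y₁ ≤ p.2 ∧ p.2 ≤ y₂}

/-- A (maximal) horizontal axis of the tree `t`: consecutive vertices on the line `y = l`
joined by tree edges, not extendable on either end. -/
def IsHAxis {X : Set (ℤ × ℤ)} (t : TreeOf X) (l x₁ x₂ : ℤ) : Prop :=
  x₁ ≤ x₂ ∧ (∀ x, x₁ ≤ x → x ≤ x₂ → ((x, l) : ℤ × ℤ) ∈ X) ∧
  (∀ x, x₁ ≤ x → x < x₂ → t.adj (x, l) (x + 1, l)) ∧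
  ¬ t.adj (x₁ - 1, l) (x₁, l) ∧ ¬ t.adj (x₂, l) (x₂ + 1, l)

/-- A (maximal) vertical axis of the tree `t`. -/
def IsVAxis {X : Set (ℤ × ℤ)} (t : TreeOf X) (l y₁ y₂ : ℤ) : Prop :=
  y₁ ≤ y₂ ∧ (∀ y, y₁ ≤ y → y ≤ y₂ → ((l, y) : ℤ × ℤ) ∈ X) ∧
  (∀ y, y₁ ≤ y → y < y₂ → t.adj (l, y) (l, y + 1)) ∧
  ¬ t.adj (l, y₁ - 1) (l, y₁) ∧ ¬ t.adj (l, y₂) (l, y₂ + 1)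

/-- The union of the axial branches of `t` beginning from `v` relative to the axis `a`
(together with `v` itself): everything reachable from `v` through a neighbor not on `a`
without revisiting `v`. -/
def branch {X : Set (ℤ × ℤ)} (t : TreeOf X) (a : Set (ℤ × ℤ)) (v : ℤ × ℤ) :
    Set (ℤ × ℤ) :=
  {v} ∪ {p | ∃ w, t.adj v w ∧ w ∉ a ∧
    Relation.ReflTransGen (fun x y => t.adj x y ∧ x ≠ v ∧ y ≠ v) w p}

/-- The axial branches of `t` beginning from `v` are symmetric across the reflection `ρ`
(of `ℤ²` across the line of the axis `a`). -/
def BranchSymmetric {X : Set (ℤ × ℤ)} (t : TreeOf X) (a : Set (ℤ × ℤ))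
    (ρ : ℤ × ℤ → ℤ × ℤ) (v : ℤ × ℤ) : Prop :=
  (∀ p ∈ branch t a v, ρ p ∈ branch t a v) ∧
  (∀ p q, p ∈ branch t a v → q ∈ branch t a v → t.adj p q → t.adj (ρ p) (ρ q))

/-- `t` is off-by-one symmetric across the horizontal axis determined by `(l, x₁, x₂)`:
the branches from every vertex of the axis, except at most one, are symmetric across it. -/
def OffByOneH {X : Set (ℤ × ℤ)} (t : TreeOf X) (l x₁ x₂ : ℤ) : Prop :=
  ∃ v₀ : ℤ × ℤ, ∀ x, x₁ ≤ x → x ≤ x₂ → ((x, l) : ℤ × ℤ) ≠ v₀ →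
    BranchSymmetric t (hAxisSet l x₁ x₂) (fun p => (p.1, 2 * l - p.2)) (x, l)

/-- `t` is off-by-one symmetric across the vertical axis determined by `(l, y₁, y₂)`. -/
def OffByOneV {X : Set (ℤ × ℤ)} (t : TreeOf X) (l y₁ y₂ : ℤ) : Prop :=
  ∃ v₀ : ℤ × ℤ, ∀ y, y₁ ≤ y → y ≤ y₂ → ((l, y) : ℤ × ℤ) ≠ v₀ →
    BranchSymmetric t (vAxisSet l y₁ y₂) (fun p => (2 * l - p.1, p.2)) (l, y)

/-- A tree is ε-symmetric if it is off-by-one symmetric across each of its axes. -/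
def TreeOf.EpsSymmetric {X : Set (ℤ × ℤ)} (t : TreeOf X) : Prop :=
  (∀ l x₁ x₂, IsHAxis t l x₁ x₂ → OffByOneH t l x₁ x₂) ∧
  (∀ l y₁ y₂, IsVAxis t l y₁ y₂ → OffByOneV t l y₁ y₂)

/-- A shape is ε-symmetric if some spanning tree of its grid graph is ε-symmetric. -/
def EpsSymmetricShape (X : Set (ℤ × ℤ)) : Prop :=
  ∃ t : TreeOf X, TreeOf.EpsSymmetric t

/-- The `c`-scaling of a shape: replace each point by a `c × c` block. -/
def scaleShape (X : Set (ℤ × ℤ)) (c : ℕ) : Set (ℤ × ℤ) :=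
  {p | (Int.fdiv p.1 (c : ℤ), Int.fdiv p.2 (c : ℤ)) ∈ X}

/-- The assembly encoded by a finite list of placed tiles. -/
def listAssembly (L : List ((ℤ × ℤ) × Placement)) : Assembly :=
  fun p => (L.find? fun e => decide (e.1 = p)).map Prod.snd

/-! ## Infrastructure -/

open Function

lemma glueBind_some_some (l₁ l₂ : ℤ) (s₁ s₂ : ℕ) :
    glueBind (some (l₁, s₁)) (some (l₂, s₂)) = if l₂ = -l₁ ∧ s₂ = s₁ then s₁ else 0 := rfl

lemma glueBind_comm (g h : Glue) : glueBind g h = glueBind h g := by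
  rcases g with _ | ⟨l₁, s₁⟩ <;> rcases h with _ | ⟨l₂, s₂⟩
  · rfl
  · rfl
  · rfl
  · rw [glueBind_some_some, glueBind_some_some]
    by_cases h1 : l₂ = -l₁ ∧ s₂ = s₁
    · have h2 : l₁ = -l₂ ∧ s₁ = s₂ := ⟨by omega, h1.2.symm⟩
      rw [if_pos h1, if_pos h2, h1.2]
    · have h2 : ¬ (l₁ = -l₂ ∧ s₁ = s₂) := by
        rintro ⟨a, b⟩; exact h1 ⟨by omega, b.symm⟩
      rw [if_neg h1, if_neg h2]

/-- The four grid neighbours of a position. -/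
def nbhdF (p : ℤ × ℤ) : Finset (ℤ × ℤ) :=
  {(p.1 + 1, p.2), (p.1 - 1, p.2), (p.1, p.2 + 1), (p.1, p.2 - 1)}

lemma facingGlue_eq_none (pl : Placement) {p q : ℤ × ℤ} (h : q ∉ nbhdF p) :
    facingGlue pl p q = none := by
  simp only [nbhdF, Finset.mem_insert, Finset.mem_singleton, not_or] at h
  obtain ⟨h1, h2, h3, h4⟩ := h
  simp [facingGlue, h1, h2, h3, h4]

lemma bondStrength_comm (α : Assembly) (p q : ℤ × ℤ) :
    bondStrength α p q = bondStrength α q p := by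
  unfold bondStrength
  rcases hp : α p with _ | a <;> rcases hq : α q with _ | b <;> simp
  exact glueBind_comm _ _

lemma bondStrength_eq_zero_left {α : Assembly} {p q : ℤ × ℤ} (h : α p = none) :
    bondStrength α p q = 0 := by
  unfold bondStrength; rw [h]

lemma bondStrength_eq_zero_right {α : Assembly} {p q : ℤ × ℤ} (h : α q = none) :
    bondStrength α p q = 0 := by
  unfold bondStrength; rw [h]; rcases α p with _ | a <;> rfl

lemma bondStrength_eq_zero_of_not_nbhd {α : Assembly} {p q : ℤ × ℤ} (h : q ∉ nbhdF p) :
    bondStrength α p q = 0 := by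
  unfold bondStrength
  rcases α p with _ | a <;> rcases α q with _ | b <;> simp
  rw [facingGlue_eq_none a h]; rfl

lemma bondStrength_congr {α β : Assembly} {p q : ℤ × ℤ} (hp : α p = β p) (hq : α q = β q) :
    bondStrength α p q = bondStrength β p q := by
  unfold bondStrength; rw [hp, hq]

lemma pos_ne_of_bond {α : Assembly} {p q : ℤ × ℤ} (h : 0 < bondStrength α p q) :
    α p ≠ none ∧ α q ≠ none ∧ q ∈ nbhdF p := by
  refine ⟨?_, ?_, ?_⟩
  · intro hn; rw [bondStrength_eq_zero_left hn] at h; exact absurd h (lt_irrefl 0)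
  · intro hn; rw [bondStrength_eq_zero_right hn] at h; exact absurd h (lt_irrefl 0)
  · by_contra hn; rw [bondStrength_eq_zero_of_not_nbhd hn] at h; exact absurd h (lt_irrefl 0)

lemma self_not_mem_nbhdF (p : ℤ × ℤ) : p ∉ nbhdF p := by
  simp only [nbhdF, Finset.mem_insert, Finset.mem_singleton, not_or, Prod.ext_iff]
  omega

/-- Sum of bond strengths of edges emanating from `p` is at most the sum over
the four neighbours. -/
lemma sum_bond_le_nbhd (α : Assembly) (p : ℤ × ℤ) (E : Finset ((ℤ × ℤ) × (ℤ × ℤ)))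
    (hE : ∀ e ∈ E, e.1 = p) :
    ∑ e ∈ E, bondStrength α e.1 e.2 ≤ ∑ x ∈ nbhdF p, bondStrength α p x := by
  have h1 : ∑ e ∈ E, bondStrength α e.1 e.2 = ∑ x ∈ E.image Prod.snd, bondStrength α p x := by
    rw [Finset.sum_image]
    · exact Finset.sum_congr rfl (fun e he => by rw [hE e he])
    · intro a ha b hb hab
      have h1 := hE a ha; have h2 := hE b hb
      calc a = (a.1, a.2) := rfl
        _ = (b.1, b.2) := by rw [h1, h2, hab]
        _ = b := rfl
  rw [h1]
  have h2 : ∑ x ∈ E.image Prod.snd, bondStrength α p x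
      = ∑ x ∈ (E.image Prod.snd) ∩ nbhdF p, bondStrength α p x := by
    refine (Finset.sum_subset (Finset.inter_subset_left) ?_).symm
    intro x hx hnx
    have : x ∉ nbhdF p := by
      intro hmem; exact hnx (Finset.mem_inter.mpr ⟨hx, hmem⟩)
    exact bondStrength_eq_zero_of_not_nbhd this
  rw [h2]
  exact Finset.sum_le_sum_of_subset Finset.inter_subset_right

/-- Extraction from a singleton cut: the tile at `p` binds its neighbours with total
strength at least `τ`. -/
lemma stable_singleton_cut {α : Assembly} {τ : ℕ} (h : Stable α τ) {p : ℤ × ℤ}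
    (hp : α p ≠ none) (hne : (adom α \ {p}).Nonempty) :
    τ ≤ ∑ x ∈ nbhdF p, bondStrength α p x := by
  obtain ⟨E, hE, hsum⟩ := h {p} (by intro x hx; simp at hx; subst hx; exact hp)
    ⟨p, rfl⟩ hne
  refine le_trans hsum (sum_bond_le_nbhd α p E ?_)
  intro e he; exact (hE e he).1
lemma stable_cut_single {α : Assembly} {τ : ℕ} (h : Stable α τ) {A : Set (ℤ × ℤ)}
    (hA : A ⊆ adom α) (hne : A.Nonempty) (hne' : (adom α \ A).Nonempty) {u v : ℤ × ℤ}
    (hz : ∀ x y, x ∈ A → y ∈ adom α \ A → (x, y) ≠ (u, v) → bondStrength α x y = 0) :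
    τ ≤ bondStrength α u v := by
  obtain ⟨E, hE, hsum⟩ := h A hA hne hne'
  refine le_trans hsum ?_
  have : ∀ e ∈ E, bondStrength α e.1 e.2 ≤ if e = (u, v) then bondStrength α u v else 0 := by
    intro e he
    by_cases hc : e = (u, v)
    · subst hc; simp
    · rw [hz e.1 e.2 (hE e he).1 (hE e he).2 (by simpa using hc)]; simp
  refine le_trans (Finset.sum_le_sum this) ?_
  rw [Finset.sum_ite_eq' E (u,v) (fun _ => bondStrength α u v)]
  split <;> simp

/-- Assemblies whose bond graph is connected by bonds of strength at least `τ`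
are `τ`-stable. -/
lemma conn_stable {α : Assembly} {τ : ℕ}
    (h : ∀ p, α p ≠ none → ∀ q, α q ≠ none →
      Relation.ReflTransGen (fun x y => τ ≤ bondStrength α x y ∧ α x ≠ none ∧ α y ≠ none) p q) :
    Stable α τ := by
  rcases Nat.eq_zero_or_pos τ with hτ | hτ
  · subst hτ
    intro A _ _ _
    exact ⟨∅, by simp, by simp⟩
  · intro A hA ⟨a, ha⟩ ⟨b, hb⟩
    have key : ∀ c, Relation.ReflTransGen
        (fun x y => τ ≤ bondStrength α x y ∧ α x ≠ none ∧ α y ≠ none) a c →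
        c ∉ A → ∃ x y, x ∈ A ∧ y ∈ adom α \ A ∧ τ ≤ bondStrength α x y := by
      intro c hrtg
      induction hrtg with
      | refl => intro hc; exact absurd ha hc
      | tail h1 h2 ih =>
        rename_i u v
        intro hv
        by_cases hu : u ∈ A
        · exact ⟨u, v, hu, ⟨h2.2.2, hv⟩, h2.1⟩
        · exact ih hu
    obtain ⟨x, y, hx, hy, hxy⟩ := key b (h a (hA ha) b hb.1) hb.2
    refine ⟨{(x, y)}, ?_, by simpa using hxy⟩
    simp only [Finset.mem_singleton]
    rintro e rfl
    exact ⟨hx, hy⟩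
/-! ## Sequences and producibility -/

lemma adom_update {α : Assembly} {p : ℤ × ℤ} {pl : Placement} (h : α p = none) :
    adom (Function.update α p (some pl)) = insert p (adom α) := by
  ext x
  by_cases hx : x = p
  · subst hx; simp [adom, Function.update_self]
  · simp [adom, Function.update_of_ne hx, hx]

lemma attaches_mono {S : RTAS} {α β : Assembly} (h : Attaches S α β) :
    ∀ p pl, α p = some pl → β p = some pl := by
  obtain ⟨q, t, r, hq, -, rfl, -⟩ := h
  intro p pl hp
  have : p ≠ q := by rintro rfl; rw [hq] at hp; exact absurd hp (by simp)
  rw [Function.update_of_ne this]; exact hp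

lemma chain_mono {S : RTAS} {α β : Assembly} (h : Relation.ReflTransGen (Attaches S) α β) :
    ∀ p pl, α p = some pl → β p = some pl := by
  induction h with
  | refl => exact fun _ _ h => h
  | tail _ hbc ih => exact fun p pl hp => attaches_mono hbc p pl (ih p pl hp)

lemma chain_stable {S : RTAS} {β : Assembly}
    (h : Relation.ReflTransGen (Attaches S) S.seed β) : Stable β S.temp := by
  induction h with
  | refl => exact S.seed_stable
  | tail _ hbc _ => exact hbc.choose_spec.choose_spec.choose_spec.2.2.2

/-- A step sequence: each successive assembly is equal or obtained by one attachment. -/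
def StepSeq (S : RTAS) (g : ℕ → Assembly) : Prop :=
  ∀ n, g (n + 1) = g n ∨ Attaches S (g n) (g (n + 1))

lemma stepSeq_mono {S : RTAS} {g : ℕ → Assembly} (hg : StepSeq S g) {m n : ℕ} (h : m ≤ n) :
    ∀ p pl, g m p = some pl → g n p = some pl := by
  induction n, h using Nat.le_induction with
  | base => exact fun _ _ h => h
  | succ n hmn ih =>
    intro p pl hp
    rcases hg n with he | ha
    · rw [he]; exact ih p pl hp
    · exact attaches_mono ha p pl (ih p pl hp)

lemma stepSeq_tiles {S : RTAS} {g : ℕ → Assembly} (hg : StepSeq S g) (h0 : g 0 = S.seed) :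
    ∀ n p pl, g n p = some pl → pl.1 ∈ S.tiles := by
  intro n
  induction n with
  | zero => intro p pl hp; exact S.seed_tiles p pl (by rw [← h0]; exact hp)
  | succ n ih =>
    intro p pl hp
    rcases hg n with he | ha
    · exact ih p pl (by rw [← he]; exact hp)
    · obtain ⟨q, t, r, hq, ht, hupd, -⟩ := ha
      by_cases hpq : p = q
      · subst hpq
        rw [hupd, Function.update_self] at hp
        obtain rfl : pl = (t, r) := by injection hp.symm
        exact ht
      · rw [hupd, Function.update_of_ne hpq] at hp
        exact ih p pl hp

lemma stepSeq_stable {S : RTAS} {g : ℕ → Assembly} (hg : StepSeq S g) (h0 : g 0 = S.seed) :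
    ∀ n, Stable (g n) S.temp := by
  intro n
  induction n with
  | zero => rw [h0]; exact S.seed_stable
  | succ n ih =>
    rcases hg n with he | ha
    · rw [he]; exact ih
    · exact ha.choose_spec.choose_spec.choose_spec.2.2.2

lemma producible_some_agree {S : RTAS} {α : Assembly} {f : ℕ → Assembly}
    (hf : StepSeq S f)
    (hlim : ∀ p pl, α p = some pl ↔ ∃ n, f n p = some pl) {n : ℕ} {p : ℤ × ℤ}
    (h : f n p ≠ none) : α p = f n p := by
  rcases hn : f n p with _ | pl
  · exact absurd hn h
  · exact (hlim p pl).2 ⟨n, hn⟩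

lemma producible_stable {S : RTAS} {α : Assembly} (h : Producible S α) :
    Stable α S.temp := by
  obtain ⟨f, h0, hstep, hlim⟩ := h
  have hf : StepSeq S f := hstep
  intro A hA ⟨a, ha⟩ ⟨b, hb⟩
  rcases hαa : α a with _ | pla
  · exact absurd hαa (hA ha)
  rcases hαb : α b with _ | plb
  · exact absurd hαb hb.1
  obtain ⟨n₁, hn₁⟩ := (hlim a pla).1 hαa
  obtain ⟨n₂, hn₂⟩ := (hlim b plb).1 hαb
  set n := max n₁ n₂ with hn
  have hfa : f n a = some pla := stepSeq_mono hf (le_max_left _ _) a pla hn₁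
  have hfb : f n b = some plb := stepSeq_mono hf (le_max_right _ _) b plb hn₂
  obtain ⟨E, hE, hsum⟩ := stepSeq_stable hf h0 n (A ∩ adom (f n))
    (fun x hx => hx.2) ⟨a, ha, by simp [adom, hfa]⟩
    ⟨b, by simp [adom, hfb], fun hc => hb.2 hc.1⟩
  refine ⟨E, ?_, ?_⟩
  · intro e he
    obtain ⟨h1, h2⟩ := hE e he
    refine ⟨h1.1, ?_, ?_⟩
    · rw [adom, Set.mem_setOf_eq, producible_some_agree hf hlim h2.1]
      exact h2.1
    · intro hc
      exact h2.2 ⟨hc, h2.1⟩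
  · refine le_trans hsum (le_of_eq (Finset.sum_congr rfl ?_))
    intro e he
    obtain ⟨h1, h2⟩ := hE e he
    exact bondStrength_congr (producible_some_agree hf hlim (h1.2)).symm
      (producible_some_agree hf hlim (h2.1)).symm

lemma producible_tiles {S : RTAS} {α : Assembly} (h : Producible S α) :
    ∀ p pl, α p = some pl → pl.1 ∈ S.tiles := by
  obtain ⟨f, h0, hstep, hlim⟩ := h
  intro p pl hp
  obtain ⟨n, hn⟩ := (hlim p pl).1 hp
  exact stepSeq_tiles hstep h0 n p pl hn

lemma producible_seed {S : RTAS} {α : Assembly} (h : Producible S α) :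
    ∀ p pl, S.seed p = some pl → α p = some pl := by
  obtain ⟨f, h0, hstep, hlim⟩ := h
  intro p pl hp
  exact (hlim p pl).2 ⟨0, by rw [h0]; exact hp⟩

/-- Attaching a tile that binds with total strength at least `τ` to a `τ`-stable assembly
yields a `τ`-stable assembly. -/
lemma attach_ok {α : Assembly} {τ : ℕ} {p : ℤ × ℤ} {pl : Placement}
    (hstab : Stable α τ) (hnone : α p = none) (E : Finset ((ℤ × ℤ) × (ℤ × ℤ)))
    (hE : ∀ e ∈ E, e.1 = p ∧ α e.2 ≠ none)
    (hsum : τ ≤ ∑ e ∈ E, bondStrength (Function.update α p (some pl)) e.1 e.2) :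
    Stable (Function.update α p (some pl)) τ := by
  classical
  set β := Function.update α p (some pl) with hβ
  have hadom : adom β = insert p (adom α) := adom_update hnone
  have hβsome : ∀ x, x ≠ p → β x = α x := fun x hx => Function.update_of_ne hx _ _
  have hpadom : p ∉ adom α := fun hc => hc hnone
  intro A hA hne hne'
  by_cases hpA : p ∈ A
  · by_cases hone : ∀ x ∈ A, x = p
    · -- A = {p}
      refine ⟨E.filter (fun e => e.2 ∉ A), ?_, ?_⟩
      · intro e he
        rw [Finset.mem_filter] at he
        obtain ⟨h1, h2⟩ := hE e he.1
        refine ⟨h1 ▸ hpA, ?_, he.2⟩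
        rw [hadom]
        exact Set.mem_insert_of_mem _ h2
      · refine le_trans hsum (le_of_eq ?_)
        rw [← Finset.sum_filter_add_sum_filter_not E (fun e => e.2 ∉ A)]
        have : ∀ e ∈ E.filter (fun e => ¬ e.2 ∉ A), bondStrength β e.1 e.2 = 0 := by
          intro e he
          rw [Finset.mem_filter, not_not] at he
          have h2 := hone e.2 he.2
          have h1 := (hE e he.1).1
          rw [h1, h2]
          exact bondStrength_eq_zero_of_not_nbhd (self_not_mem_nbhdF p)
        rw [Finset.sum_eq_zero this, add_zero]
    · push_neg at hone
      obtain ⟨x, hxA, hxp⟩ := hone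
      obtain ⟨E', hE', hsum'⟩ := hstab (A \ {p})
        (by
          intro y hy
          have := hA hy.1
          rw [hadom] at this
          rcases this with h | h
          · exact absurd h hy.2
          · exact h)
        ⟨x, hxA, hxp⟩
        (by
          obtain ⟨y, hy⟩ := hne'
          refine ⟨y, ?_, ?_⟩
          · have hyp : y ≠ p := fun hc => hy.2 (hc ▸ hpA)
            rw [hadom] at hy
            rcases hy.1 with h | h
            · exact absurd h hyp
            · exact h
          · exact fun hc => hy.2 hc.1)
      refine ⟨E', ?_, ?_⟩
      · intro e he
        obtain ⟨h1, h2⟩ := hE' e he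
        refine ⟨h1.1, ?_, ?_⟩
        · rw [hadom]; exact Set.mem_insert_of_mem _ h2.1
        · intro hc
          have : e.2 ≠ p := fun hc' => (hc' ▸ h2.1) hnone
          exact h2.2 ⟨hc, this⟩
      · refine le_trans hsum' (le_of_eq (Finset.sum_congr rfl ?_))
        intro e he
        obtain ⟨h1, h2⟩ := hE' e he
        have he1 : e.1 ≠ p := h1.2
        have he2 : e.2 ≠ p := fun hc => (hc ▸ h2.1) hnone
        exact bondStrength_congr (hβsome _ he1).symm (hβsome _ he2).symm
  · have hAα : A ⊆ adom α := by
      intro y hy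
      have hyp : y ≠ p := fun hc => hpA (hc ▸ hy)
      have := hA hy
      rw [hadom] at this
      rcases this with h | h
      · exact absurd h hyp
      · exact h
    by_cases hc : (adom α \ A).Nonempty
    · obtain ⟨E', hE', hsum'⟩ := hstab A hAα hne hc
      refine ⟨E', ?_, ?_⟩
      · intro e he
        obtain ⟨h1, h2⟩ := hE' e he
        exact ⟨h1, by rw [hadom]; exact Set.mem_insert_of_mem _ h2.1, h2.2⟩
      · refine le_trans hsum' (le_of_eq (Finset.sum_congr rfl ?_))
        intro e he
        obtain ⟨h1, h2⟩ := hE' e he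
        have he1 : e.1 ≠ p := fun hc' => hpadom (hc' ▸ hAα h1)
        have he2 : e.2 ≠ p := fun hc' => hpadom (hc' ▸ h2.1)
        exact bondStrength_congr (hβsome _ he1).symm (hβsome _ he2).symm
    · -- A = adom α, complement is {p}
      have hAeq : ∀ y ∈ adom α, y ∈ A := by
        intro y hy
        by_contra hyA
        exact hc ⟨y, hy, hyA⟩
      refine ⟨(E.filter (fun e => e.2 ∈ A)).image (fun e => (e.2, e.1)), ?_, ?_⟩
      · intro e he
        rw [Finset.mem_image] at he
        obtain ⟨e', he', rfl⟩ := he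
        rw [Finset.mem_filter] at he'
        obtain ⟨h1, h2⟩ := hE e' he'.1
        refine ⟨he'.2, ?_, ?_⟩
        · rw [hadom, h1]; exact Set.mem_insert _ _
        · rw [h1]; exact hpA
      · have hinj : Set.InjOn (fun e : (ℤ × ℤ) × (ℤ × ℤ) => (e.2, e.1))
            (E.filter (fun e => e.2 ∈ A)) := by
          intro a ha b hb hab
          simp only [Prod.mk.injEq] at hab
          calc a = (a.1, a.2) := rfl
            _ = (b.1, b.2) := by rw [hab.1, hab.2]
            _ = b := rfl
        rw [Finset.sum_image hinj]
        have hfil : E.filter (fun e => e.2 ∈ A) = E := by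
          refine Finset.filter_true_of_mem ?_
          intro e he
          exact hAeq e.2 (hE e he).2
        rw [hfil]
        refine le_trans hsum (le_of_eq (Finset.sum_congr rfl ?_))
        intro e he
        exact bondStrength_comm β e.1 e.2
/-! ## Existence of terminal assemblies -/

/-- A candidate attachment. -/
abbrev Cand : Type := (ℤ × ℤ) × TileType × Reflection

open Classical in
/-- One fair step: attempt the candidate encoded in `n`. -/
noncomputable def fairStep (S : RTAS) (β : Assembly) (n : ℕ) : Assembly :=
  (Encodable.decode (Nat.unpair n).2 : Option Cand).elim β (fun c =>
    if β c.1 = none ∧ c.2.1 ∈ S.tiles ∧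
        Stable (Function.update β c.1 (some (c.2.1, c.2.2))) S.temp
    then Function.update β c.1 (some (c.2.1, c.2.2)) else β)

noncomputable def fairSeq (S : RTAS) (β : Assembly) : ℕ → Assembly
  | 0 => β
  | n + 1 => fairStep S (fairSeq S β n) n

lemma fairStep_cases (S : RTAS) (β : Assembly) (n : ℕ) :
    fairStep S β n = β ∨ Attaches S β (fairStep S β n) := by
  unfold fairStep
  rcases hdec : (Encodable.decode (Nat.unpair n).2 : Option Cand) with _ | c
  · exact Or.inl rfl
  · simp only [Option.elim_some]
    split
    · rename_i hcond
      exact Or.inr ⟨c.1, c.2.1, c.2.2, hcond.1, hcond.2.1, rfl, hcond.2.2⟩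
    · exact Or.inl rfl

lemma fairStep_fires (S : RTAS) (β : Assembly) (n : ℕ) {p : ℤ × ℤ} {t : TileType}
    {r : Reflection}
    (hdec : (Encodable.decode (Nat.unpair n).2 : Option Cand) = some (p, t, r))
    (hcond : β p = none ∧ t ∈ S.tiles ∧
      Stable (Function.update β p (some (t, r))) S.temp) :
    fairStep S β n = Function.update β p (some (t, r)) := by
  unfold fairStep
  rw [hdec]
  simp only [Option.elim_some]
  exact if_pos hcond

lemma fairSeq_stepSeq (S : RTAS) (β : Assembly) :
    StepSeq S (fairSeq S β) := by
  intro n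
  rcases fairStep_cases S (fairSeq S β n) n with h | h
  · exact Or.inl h
  · exact Or.inr h

open Classical in
/-- The limit of the fair sequence. -/
noncomputable def fairLim (S : RTAS) (β : Assembly) : Assembly :=
  fun p => if h : ∃ n, fairSeq S β n p ≠ none then fairSeq S β (Classical.choose h) p else none

lemma fairLim_some_iff (S : RTAS) (β : Assembly) (p : ℤ × ℤ) (pl : Placement) :
    fairLim S β p = some pl ↔ ∃ n, fairSeq S β n p = some pl := by
  constructor
  · intro h
    unfold fairLim at h
    split at h
    · rename_i hex
      exact ⟨Classical.choose hex, h⟩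
    · exact absurd h (by simp)
  · rintro ⟨n, hn⟩
    have hex : ∃ m, fairSeq S β m p ≠ none := ⟨n, by rw [hn]; simp⟩
    unfold fairLim
    rw [dif_pos hex]
    set m := Classical.choose hex with hm
    have hms := Classical.choose_spec hex
    rcases hv : fairSeq S β m p with _ | pl'
    · exact absurd hv hms
    · have h1 : fairSeq S β (max m n) p = some pl' :=
        stepSeq_mono (fairSeq_stepSeq S β) (le_max_left _ _) p pl' hv
      have h2 : fairSeq S β (max m n) p = some pl :=
        stepSeq_mono (fairSeq_stepSeq S β) (le_max_right _ _) p pl hn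
      rw [h1] at h2
      exact h2

lemma chain_seq {S : RTAS} {β : Assembly} (h : Relation.ReflTransGen (Attaches S) S.seed β) :
    ∃ (g : ℕ → Assembly) (N : ℕ), g 0 = S.seed ∧ StepSeq S g ∧ ∀ n, N ≤ n → g n = β := by
  induction h with
  | refl => exact ⟨fun _ => S.seed, 0, rfl, fun n => Or.inl rfl, fun n _ => rfl⟩
  | @tail b c _ hbc ih =>
    obtain ⟨g, N, h0, hstep, hN⟩ := ih
    refine ⟨fun n => if n ≤ N then g n else c, N + 1, by simp [h0], ?_, ?_⟩
    · intro n
      dsimp only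
      by_cases h1 : n + 1 ≤ N
      · rw [if_pos h1, if_pos (by omega)]
        exact hstep n
      · by_cases h2 : n ≤ N
        · have hnN : n = N := by omega
          rw [if_pos h2, if_neg h1, show g n = b from by rw [hnN]; exact hN N le_rfl]
          exact Or.inr hbc
        · rw [if_neg h1, if_neg h2]
          exact Or.inl rfl
    · intro n hn
      dsimp only
      rw [if_neg (by omega)]

/-- Every assembly reachable from the seed extends to a terminal assembly. -/
lemma exists_terminal_ge (S : RTAS) (β₀ : Assembly)
    (hchain : Relation.ReflTransGen (Attaches S) S.seed β₀) :
    ∃ γ, Terminal S γ ∧ ∀ p pl, β₀ p = some pl → γ p = some pl := by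
  classical
  set γ := fairLim S β₀ with hγ
  have hmono := fun {m n : ℕ} (h : m ≤ n) => stepSeq_mono (fairSeq_stepSeq S β₀) h
  have hlim : ∀ p pl, γ p = some pl ↔ ∃ n, fairSeq S β₀ n p = some pl :=
    fairLim_some_iff S β₀
  have hγ0 : ∀ p pl, β₀ p = some pl → γ p = some pl := by
    intro p pl hp
    exact (hlim p pl).2 ⟨0, hp⟩
  -- stabilization of individual positions
  have hstabilize : ∀ q, ∃ N, ∀ n, N ≤ n → fairSeq S β₀ n q = γ q := by
    intro q
    rcases hq : γ q with _ | pl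
    · refine ⟨0, fun n _ => ?_⟩
      rcases hv : fairSeq S β₀ n q with _ | pl'
      · rfl
      · rw [(hlim q pl').2 ⟨n, hv⟩] at hq; exact absurd hq (by simp)
    · obtain ⟨n₀, hn₀⟩ := (hlim q pl).1 hq
      exact ⟨n₀, fun n hn => hmono hn q pl hn₀⟩
  -- stability of the stages
  have hstagestable : ∀ n, Stable (fairSeq S β₀ n) S.temp := by
    intro n
    induction n with
    | zero => exact chain_stable hchain
    | succ n ih =>
      rcases fairStep_cases S (fairSeq S β₀ n) n with h | h
      · show Stable (fairStep S (fairSeq S β₀ n) n) S.temp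
        rw [h]; exact ih
      · exact h.choose_spec.choose_spec.choose_spec.2.2.2
  -- γ is producible
  obtain ⟨g, N, hg0, hgstep, hgN⟩ := chain_seq hchain
  have hprod : Producible S γ := by
    refine ⟨fun n => if n < N then g n else fairSeq S β₀ (n - N), ?_, ?_, ?_⟩
    · dsimp only
      by_cases h : 0 < N
      · rw [if_pos h]; exact hg0
      · rw [if_neg h]
        have : N = 0 := by omega
        show fairSeq S β₀ (0 - N) = S.seed
        rw [this]
        show β₀ = S.seed
        have := hgN 0 (by omega)
        rw [← this, hg0]
    · intro n
      dsimp only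
      by_cases h1 : n + 1 < N
      · rw [if_pos h1, if_pos (by omega)]
        exact hgstep n
      · by_cases h2 : n < N
        · have hn : n + 1 = N := by omega
          rw [if_pos h2, if_neg (by omega)]
          have : n + 1 - N = 0 := by omega
          rw [this]
          show fairSeq S β₀ 0 = g n ∨ _
          have hgn : g (n+1) = β₀ := hgN (n+1) (by omega)
          show β₀ = g n ∨ Attaches S (g n) β₀
          rcases hgstep n with he | ha
          · exact Or.inl (by rw [← hgn, he])
          · exact Or.inr (by rw [← hgn]; exact ha)
        · rw [if_neg h1, if_neg h2]
          have : n + 1 - N = (n - N) + 1 := by omega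
          rw [this]
          exact fairSeq_stepSeq S β₀ (n - N)
    · intro p pl
      rw [hlim p pl]
      constructor
      · rintro ⟨n, hn⟩
        refine ⟨n + N, ?_⟩
        dsimp only
        rw [if_neg (by omega)]
        have : n + N - N = n := by omega
        rw [this]; exact hn
      · rintro ⟨n, hn⟩
        dsimp only at hn
        by_cases h : n < N
        · rw [if_pos h] at hn
          have : g N p = some pl := stepSeq_mono hgstep (by omega) p pl hn
          rw [hgN N le_rfl] at this
          exact ⟨0, this⟩
        · rw [if_neg h] at hn
          exact ⟨n - N, hn⟩
  refine ⟨γ, ⟨hprod, ?_⟩, hγ0⟩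
  -- terminality
  rintro δ ⟨p, t, r, hnone, htile, hupd, hstab⟩
  -- stabilization index for the neighbourhood of p
  choose Nf hNf using hstabilize
  set M := (nbhdF p).sup Nf with hM
  set n := Nat.pair M (Encodable.encode ((p, t, r) : Cand)) with hn
  have hnM : M ≤ n := Nat.left_le_pair _ _
  have hdec : (Encodable.decode (Nat.unpair n).2 : Option Cand) = some (p, t, r) := by
    rw [hn, Nat.unpair_pair]
    exact Encodable.encodek _
  have hnbagree : ∀ q ∈ nbhdF p, fairSeq S β₀ n q = γ q := by
    intro q hq
    exact hNf q n (le_trans (Finset.le_sup hq) hnM)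
  have hfn_p : fairSeq S β₀ n p = none := by
    rcases hv : fairSeq S β₀ n p with _ | pl
    · rfl
    · rw [(hlim p pl).2 ⟨n, hv⟩] at hnone; exact absurd hnone (by simp)
  -- the candidate attachment is stable at stage n
  have hstagecond : Stable (Function.update (fairSeq S β₀ n) p (some (t, r))) S.temp := by
    -- extract bond sum from the stability of δ
    have hδp : δ p ≠ none := by
      rw [hupd, Function.update_self]; simp
    have hδne : (adom δ \ {p}).Nonempty := by
      obtain ⟨s, hs⟩ := S.seed_nonempty
      rcases hv : S.seed s with _ | pls
      · exact absurd hv hs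
      have hγs : γ s ≠ none := by
        rw [hγ0 s pls (chain_mono hchain s pls hv)]; simp
      have hsp : s ≠ p := by
        intro hc; rw [hc] at hγs; exact hγs hnone
      refine ⟨s, ?_, by simpa using hsp⟩
      rw [hupd, adom]
      simp only [Set.mem_setOf_eq, Function.update_of_ne hsp]
      exact hγs
    have hcut := stable_singleton_cut hstab hδp hδne
    refine attach_ok (hstagestable n) hfn_p
      (((nbhdF p).filter (fun x => γ x ≠ none)).image (fun x => (p, x))) ?_ ?_
    · intro e he
      rw [Finset.mem_image] at he
      obtain ⟨x, hx, rfl⟩ := he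
      rw [Finset.mem_filter] at hx
      refine ⟨rfl, ?_⟩
      rw [hnbagree x hx.1]
      exact hx.2
    · have hinj : Set.InjOn (fun x : ℤ × ℤ => (p, x))
          ((nbhdF p).filter (fun x => γ x ≠ none)) := by
        intro a _ b _ hab
        simpa using hab
      rw [Finset.sum_image hinj]
      refine le_trans hcut (le_of_eq ?_)
      rw [← Finset.sum_filter_add_sum_filter_not (nbhdF p) (fun x => γ x ≠ none)
        (fun x => bondStrength δ p x)]
      have hz : ∀ x ∈ (nbhdF p).filter (fun x => ¬ γ x ≠ none),
          bondStrength δ p x = 0 := by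
        intro x hx
        rw [Finset.mem_filter, not_not] at hx
        have hxp : x ≠ p := by
          intro hc; rw [hc] at hx; exact absurd (self_not_mem_nbhdF p) (fun h => h hx.1)
        refine bondStrength_eq_zero_right ?_
        rw [hupd, Function.update_of_ne hxp]
        exact hx.2
      rw [Finset.sum_eq_zero hz, add_zero]
      refine Finset.sum_congr rfl ?_
      intro x hx
      rw [Finset.mem_filter] at hx
      have hxp : x ≠ p := by
        intro hc; rw [hc] at hx; exact (self_not_mem_nbhdF p) hx.1
      refine bondStrength_congr ?_ ?_
      · rw [hupd, Function.update_self, Function.update_self]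
      · rw [hupd, Function.update_of_ne hxp, Function.update_of_ne hxp,
          hnbagree x hx.1]
  -- hence the fair step fires, contradiction
  have hfire := fairStep_fires S (fairSeq S β₀ n) n hdec ⟨hfn_p, htile, hstagecond⟩
  have : fairSeq S β₀ (n + 1) p = some (t, r) := by
    show fairStep S (fairSeq S β₀ n) n p = some (t, r)
    rw [hfire, Function.update_self]
  rw [(hlim p (t, r)).2 ⟨n + 1, this⟩] at hnone
  exact absurd hnone (by simp)
/-! ## The shape `Z` and a system that weakly self-assembles it -/

instance : DecidableEq TileType := fun a b => instDecidableEqProd a b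

def Zshape : Set (ℤ × ℤ) := {(0, 1), (0, 0), (1, 0), (1, -1)}

abbrev rD : Reflection := (false, false)
abbrev rH : Reflection := (true, false)

/-- Tiles: glues are `(north, east, south, west)`. -/
def tC0 : TileType := (some (1, 2), some (3, 1), some (2, 2), none)
def tT : TileType := (none, some (7, 2), some (-1, 2), some (7, 2))
def tP : TileType := (some (10, 1), none, some (10, 1), some (-7, 2))
def tH1 : TileType := (some (-2, 2), some (5, 1), none, some (5, 1))
def tC1 : TileType := (some (-10, 1), none, some (4, 1), some (-3, 1))
def tB : TileType := (some (-4, 1), none, none, some (-5, 1))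

def wTiles : Finset TileType := {tC0, tT, tP, tH1, tC1, tB}
def markedB : Finset TileType := {tC0, tT, tC1, tB}

def wseed : Assembly := fun p => if p = (0, 0) then some (tC0, rD) else none

/-- Occupied positions. -/
def OL : List (ℤ × ℤ) := [(0,0), (0,1), (1,1), (-1,1), (0,-1), (1,0), (1,-1)]
/-- Occupied positions together with the frontier. -/
def UL : List (ℤ × ℤ) :=
  OL ++ [(-1,0), (0,2), (1,2), (2,1), (-1,2), (-2,1), (2,0), (2,-1), (1,-2), (-1,-1), (0,-2)]

def TList : List TileType := [tC0, tT, tP, tH1, tC1, tB]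
def RList : List Reflection := [(false,false), (true,false), (false,true), (true,true)]

/-- Canonical placement at each occupied position. -/
def canonPl (p : ℤ × ℤ) : Placement :=
  if p = (0,1) then (tT, rD)
  else if p = (1,1) then (tP, rD)
  else if p = (-1,1) then (tP, rH)
  else if p = (0,-1) then (tH1, rD)
  else if p = (1,0) then (tC1, rD)
  else if p = (1,-1) then (tB, rD)
  else (tC0, rD)

def mglue (x q : ℤ × ℤ) : Glue := facingGlue (canonPl x) x q

/-- Occupancy dependencies. -/
def depL (x : ℤ × ℤ) : List (ℤ × ℤ) :=
  if x = (1,1) ∨ x = (-1,1) then [(0,1)]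
  else if x = (1,0) then [(1,1)]
  else if x = (1,-1) then [(1,0), (0,-1)]
  else []

/-- Possible already-occupied neighbours of an empty position `q`. -/
def maskF (q : ℤ × ℤ) : Finset (ℤ × ℤ) :=
  (nbhdF q).filter (fun x => x ∈ OL ∧ q ∉ depL x)

/-- Acceptable attachments. -/
abbrev wGood (q : ℤ × ℤ) (t : TileType) (r : Reflection) : Prop :=
  q ∈ OL ∧ q ≠ (0,0) ∧ t = (canonPl q).1 ∧
    TileType.reflect t r = TileType.reflect (canonPl q).1 (canonPl q).2

lemma nbhdF_symm {p q : ℤ × ℤ} : p ∈ nbhdF q ↔ q ∈ nbhdF p := by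
  simp only [nbhdF, Finset.mem_insert, Finset.mem_singleton, Prod.ext_iff]
  omega

lemma D4 : ∀ x ∈ OL, ∀ y ∈ nbhdF x, y ∈ UL := by decide

lemma D2 : ∀ q ∈ UL, q ≠ (0,0) → ∀ t ∈ TList, ∀ r ∈ RList,
    2 ≤ ∑ x ∈ maskF q, glueBind (facingGlue (t, r) q x) (mglue x q) → wGood q t r := by
  decide

lemma D6 : ∀ q ∈ OL, ∀ t ∈ TList, ∀ r ∈ RList, ∀ y ∈ depL q,
    ¬ (2 ≤ ∑ x ∈ maskF q \ {y}, glueBind (facingGlue (t, r) q x) (mglue x q)) := by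
  decide
/-! ## Weak self-assembly: semantic lemmas -/

def WInv (α : Assembly) : Prop :=
  α (0, 0) = some (tC0, rD) ∧
  (∀ p pl, α p = some pl → p ∈ OL ∧ pl.1 = (canonPl p).1 ∧
    TileType.reflect pl.1 pl.2 = TileType.reflect (canonPl p).1 (canonPl p).2) ∧
  (∀ x, α x ≠ none → ∀ y ∈ depL x, α y ≠ none)

lemma facingGlue_congr {a b : Placement}
    (h : TileType.reflect a.1 a.2 = TileType.reflect b.1 b.2) (p q : ℤ × ℤ) :
    facingGlue a p q = facingGlue b p q := by
  unfold facingGlue; rw [h]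

lemma mem_RList (r : Reflection) : r ∈ RList := by
  rcases r with ⟨a, b⟩
  rcases a <;> rcases b <;> decide

lemma mem_TList_of_wTiles {t : TileType} (h : t ∈ wTiles) : t ∈ TList := by
  simp only [wTiles, Finset.mem_insert, Finset.mem_singleton] at h
  rcases h with h | h | h | h | h | h <;> subst h <;> decide

lemma maskF_subset (q : ℤ × ℤ) : maskF q ⊆ nbhdF q := Finset.filter_subset _ _

lemma stable_subsingleton {α : Assembly} {τ : ℕ}
    (h : ∀ x y, α x ≠ none → α y ≠ none → x = y) : Stable α τ := by
  rintro A hA ⟨a, ha⟩ ⟨b, hb⟩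
  exact absurd (h b a hb.1 (hA ha)) (fun e => hb.2 (e ▸ ha))

def WSys : RTAS where
  tiles := wTiles
  seed := wseed
  temp := 2
  seed_nonempty := ⟨(0, 0), by simp [adom, wseed]⟩
  seed_finite := by
    refine Set.Finite.subset (Set.finite_singleton ((0, 0) : ℤ × ℤ)) ?_
    intro p hp
    simp only [adom, Set.mem_setOf_eq, wseed] at hp
    by_cases h : p = (0, 0)
    · simp [h]
    · rw [if_neg h] at hp; exact absurd rfl hp
  seed_tiles := by
    intro p pl hp
    simp only [wseed] at hp
    by_cases h : p = (0, 0)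
    · rw [if_pos h] at hp
      obtain rfl : pl = (tC0, rD) := by injection hp.symm
      decide
    · rw [if_neg h] at hp; exact absurd hp (by simp)
  seed_stable := by
    refine stable_subsingleton ?_
    intro x y hx hy
    simp only [wseed] at hx hy
    by_cases h1 : x = (0, 0) <;> by_cases h2 : y = (0, 0)
    · rw [h1, h2]
    · rw [if_neg h2] at hy; exact absurd rfl hy
    · rw [if_neg h1] at hx; exact absurd rfl hx
    · rw [if_neg h1] at hx; exact absurd rfl hx

lemma winv_seed : WInv wseed := by
  refine ⟨by simp [wseed], ?_, ?_⟩
  · intro p pl hp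
    simp only [wseed] at hp
    by_cases h : p = (0, 0)
    · rw [if_pos h] at hp
      obtain rfl : pl = (tC0, rD) := by injection hp.symm
      subst h
      refine ⟨by decide, by decide, by decide⟩
    · rw [if_neg h] at hp; exact absurd hp (by simp)
  · intro x hx y hy
    simp only [wseed] at hx
    by_cases h : x = (0, 0)
    · subst h
      have hd : depL (0, 0) = [] := by decide
      rw [hd] at hy
      exact absurd hy List.not_mem_nil
    · rw [if_neg h] at hx; exact absurd rfl hx

lemma winv_attach {α β : Assembly} (hI : WInv α) (hA : Attaches WSys α β) : WInv β := by
  obtain ⟨q, t, r, hqnone, htile, rfl, hstab⟩ := hA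
  set β := Function.update α q (some (t, r)) with hβ
  have hq00 : q ≠ (0, 0) := by
    intro h; rw [h, hI.1] at hqnone; exact absurd hqnone (by simp)
  have hβother : ∀ x, x ≠ q → β x = α x := fun x hx => Function.update_of_ne hx _ _
  have hβq : β q = some (t, r) := Function.update_self _ _ _
  have hβ00 : β (0, 0) = some (tC0, rD) := by
    rw [hβother _ (Ne.symm hq00)]; exact hI.1
  -- the bound on actual bonds by potential bonds, with an excluded neighbour set `Y`
  have hbound : ∀ Y : Finset (ℤ × ℤ), (∀ y ∈ Y, β y = none) →
      ∀ x ∈ nbhdF q, bondStrength β q x ≤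
        if x ∈ maskF q \ Y then glueBind (facingGlue (t, r) q x) (mglue x q) else 0 := by
    intro Y hY x hxnb
    rcases hβx : β x with _ | plx
    · rw [bondStrength_eq_zero_right hβx]; split <;> simp
    · have hxq : x ≠ q := by
        intro h; rw [h] at hxnb; exact self_not_mem_nbhdF q hxnb
      have hαx : α x = some plx := by rw [← hβother x hxq]; exact hβx
      obtain ⟨hxO, hxty, hxrefl⟩ := hI.2.1 x plx hαx
      have hqdep : q ∉ depL x := by
        intro hdep
        exact absurd (hI.2.2 x (by rw [hαx]; simp) q hdep) (fun h => h hqnone)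
      have hxY : x ∉ Y := by
        intro hxy; rw [hY x hxy] at hβx; exact absurd hβx (by simp)
      have hxmask : x ∈ maskF q \ Y := by
        rw [Finset.mem_sdiff, maskF, Finset.mem_filter]
        exact ⟨⟨hxnb, hxO, hqdep⟩, hxY⟩
      rw [if_pos hxmask]
      have : bondStrength β q x = glueBind (facingGlue (t, r) q x) (facingGlue plx x q) := by
        unfold bondStrength
        rw [hβq, hβx]
      rw [this, facingGlue_congr hxrefl x q]
      exact le_refl _
  have hsumbound : ∀ Y : Finset (ℤ × ℤ), (∀ y ∈ Y, β y = none) →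
      2 ≤ ∑ x ∈ maskF q \ Y, glueBind (facingGlue (t, r) q x) (mglue x q) := by
    intro Y hY
    have hcut : 2 ≤ ∑ x ∈ nbhdF q, bondStrength β q x := by
      refine stable_singleton_cut hstab (by rw [hβq]; simp) ⟨(0, 0), ?_, ?_⟩
      · rw [adom, Set.mem_setOf_eq, hβ00]; simp
      · simpa using (Ne.symm hq00)
    refine le_trans hcut (le_trans (Finset.sum_le_sum (hbound Y hY)) ?_)
    rw [Finset.sum_ite_mem]
    have : nbhdF q ∩ (maskF q \ Y) = maskF q \ Y := by
      refine Finset.inter_eq_right.mpr ?_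
      exact le_trans (Finset.sdiff_subset) (maskF_subset q)
    rw [this]
  have hmain : 2 ≤ ∑ x ∈ maskF q, glueBind (facingGlue (t, r) q x) (mglue x q) := by
    have := hsumbound ∅ (by simp)
    simpa using this
  -- q is in the universe
  have hqU : q ∈ UL := by
    by_contra hqU
    have hzero : ∀ x ∈ maskF q, glueBind (facingGlue (t, r) q x) (mglue x q) = 0 := by
      intro x hx
      rw [maskF, Finset.mem_filter] at hx
      exact absurd (D4 x hx.2.1 q (nbhdF_symm.mpr hx.1)) hqU
    rw [Finset.sum_eq_zero hzero] at hmain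
    omega
  have hgood : wGood q t r :=
    D2 q hqU hq00 t (mem_TList_of_wTiles htile) r (mem_RList r) hmain
  -- dependencies of q are occupied
  have hdeps : ∀ y ∈ depL q, β y ≠ none := by
    intro y hy
    by_contra hyn0
    have hynone : β y = none := hyn0
    have := hsumbound {y} (by intro z hz; rw [Finset.mem_singleton] at hz; rw [hz]; exact hynone)
    exact D6 q hgood.1 t (mem_TList_of_wTiles htile) r (mem_RList r) y hy this
  refine ⟨hβ00, ?_, ?_⟩
  · intro p pl hp
    by_cases hpq : p = q
    · subst hpq
      rw [hβq] at hp
      obtain rfl : pl = (t, r) := by injection hp.symm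
      exact ⟨hgood.1, hgood.2.2.1, hgood.2.2.2⟩
    · rw [hβother p hpq] at hp
      exact hI.2.1 p pl hp
  · intro x hx y hy
    by_cases hxq : x = q
    · subst hxq
      exact hdeps y hy
    · rw [hβother x hxq] at hx
      have hyn := hI.2.2 x hx y hy
      have hyq : y ≠ q := by
        intro h; rw [h] at hyn; exact hyn hqnone
      rw [hβother y hyq]
      exact hyn

lemma winv_producible {α : Assembly} (h : Producible WSys α) : WInv α := by
  obtain ⟨f, h0, hstep, hlim⟩ := h
  have hf : StepSeq WSys f := hstep
  have hn : ∀ n, WInv (f n) := by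
    intro n
    induction n with
    | zero => rw [h0]; exact winv_seed
    | succ n ih =>
      rcases hstep n with he | ha
      · rw [he]; exact ih
      · exact winv_attach ih ha
  refine ⟨?_, ?_, ?_⟩
  · exact (hlim (0, 0) (tC0, rD)).2 ⟨0, (hn 0).1⟩
  · intro p pl hp
    obtain ⟨n, hfn⟩ := (hlim p pl).1 hp
    exact (hn n).2.1 p pl hfn
  · intro x hx y hy
    rcases hαx : α x with _ | plx
    · exact absurd hαx hx
    obtain ⟨n, hfn⟩ := (hlim x plx).1 hαx
    have := (hn n).2.2 x (by rw [hfn]; simp) y hy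
    rw [producible_some_agree hf hlim this]
    exact this
/-! ## Terminal assemblies of the weak system -/

lemma canonPl_tiles (q : ℤ × ℤ) : (canonPl q).1 ∈ wTiles := by
  unfold canonPl
  split_ifs <;> decide

lemma attach_canon {γ : Assembly} (hI : WInv γ) (hstab : Stable γ 2) {q : ℤ × ℤ}
    (hq : γ q = none) (xs : Finset (ℤ × ℤ)) (hocc : ∀ x ∈ xs, γ x ≠ none)
    (hsum : 2 ≤ ∑ x ∈ xs, glueBind (facingGlue (canonPl q) q x) (mglue x q)) :
    Attaches WSys γ (Function.update γ q (some (canonPl q))) := by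
  refine ⟨q, (canonPl q).1, (canonPl q).2, hq, canonPl_tiles q, rfl, ?_⟩
  show Stable _ 2
  have key : ∀ x ∈ xs, bondStrength (Function.update γ q (some (canonPl q))) q x
      = glueBind (facingGlue (canonPl q) q x) (mglue x q) := by
    intro x hx
    rcases hγx : γ x with _ | plx
    · exact absurd hγx (hocc x hx)
    have hxq : x ≠ q := by
      intro h; rw [h, hq] at hγx; exact absurd hγx (by simp)
    have hupd : Function.update γ q (some (canonPl q)) x = some plx := by
      rw [Function.update_of_ne hxq]; exact hγx
    unfold bondStrength
    rw [Function.update_self, hupd]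
    show glueBind (facingGlue (canonPl q) q x) (facingGlue plx x q)
      = glueBind (facingGlue (canonPl q) q x) (mglue x q)
    rw [facingGlue_congr (hI.2.1 x plx hγx).2.2 x q]
    rfl
  refine attach_ok hstab hq (xs.image (fun x => (q, x))) ?_ ?_
  · intro e he
    rw [Finset.mem_image] at he
    obtain ⟨x, hx, rfl⟩ := he
    exact ⟨rfl, hocc x hx⟩
  · have hinj : Set.InjOn (fun x : ℤ × ℤ => (q, x)) xs := by
      intro a _ b _ hab; simpa using hab
    rw [Finset.sum_image hinj]
    refine le_trans hsum (le_of_eq (Finset.sum_congr rfl ?_))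
    intro x hx
    exact (key x hx).symm

lemma terminal_marked {γ : Assembly} (hT : Terminal WSys γ) :
    {p : ℤ × ℤ | ∃ pl, γ p = some pl ∧ pl.1 ∈ markedB} = Zshape := by
  have hI : WInv γ := winv_producible hT.1
  have hstab : Stable γ 2 := producible_stable hT.1
  have h00 : γ (0, 0) = some (tC0, rD) := hI.1
  -- sequential forcing of occupancy
  have force : ∀ q : ℤ × ℤ, (xs : Finset (ℤ × ℤ)) → (∀ x ∈ xs, γ x ≠ none) →
      2 ≤ ∑ x ∈ xs, glueBind (facingGlue (canonPl q) q x) (mglue x q) → γ q ≠ none := by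
    intro q xs hxs hsum hq
    exact hT.2 _ (attach_canon hI hstab hq xs hxs hsum)
  have h01 : γ (0, 1) ≠ none := by
    refine force (0, 1) {(0, 0)} (by intro x hx; rw [Finset.mem_singleton] at hx; rw [hx, h00]; simp) ?_
    rw [Finset.sum_singleton]
    decide
  have h11 : γ (1, 1) ≠ none := by
    refine force (1, 1) {(0, 1)} (by intro x hx; rw [Finset.mem_singleton] at hx; rw [hx]; exact h01) ?_
    rw [Finset.sum_singleton]
    decide
  have h0m1 : γ (0, -1) ≠ none := by
    refine force (0, -1) {(0, 0)} (by intro x hx; rw [Finset.mem_singleton] at hx; rw [hx, h00]; simp) ?_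
    rw [Finset.sum_singleton]
    decide
  have h10 : γ (1, 0) ≠ none := by
    refine force (1, 0) {(0, 0), (1, 1)} ?_ ?_
    · intro x hx
      rw [Finset.mem_insert, Finset.mem_singleton] at hx
      rcases hx with hx | hx
      · rw [hx, h00]; simp
      · rw [hx]; exact h11
    · decide
  have h1m1 : γ (1, -1) ≠ none := by
    refine force (1, -1) {(1, 0), (0, -1)} ?_ ?_
    · intro x hx
      rw [Finset.mem_insert, Finset.mem_singleton] at hx
      rcases hx with hx | hx
      · rw [hx]; exact h10
      · rw [hx]; exact h0m1
    · decide
  -- the marked set is exactly Z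
  ext p
  simp only [Set.mem_setOf_eq]
  constructor
  · rintro ⟨pl, hp, hmk⟩
    obtain ⟨hpO, hpty, -⟩ := hI.2.1 p pl hp
    rw [hpty] at hmk
    have hO : p ∈ OL := hpO
    simp only [OL, List.mem_cons, List.not_mem_nil, or_false] at hO
    rcases hO with h | h | h | h | h | h | h <;> subst h
    · exact Or.inr (Or.inl rfl)
    · exact Or.inl rfl
    · exact absurd hmk (by decide)
    · exact absurd hmk (by decide)
    · exact absurd hmk (by decide)
    · exact Or.inr (Or.inr (Or.inl rfl))
    · exact Or.inr (Or.inr (Or.inr rfl))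
  · intro hp
    simp only [Zshape, Set.mem_insert_iff, Set.mem_singleton_iff] at hp
    have hZocc : γ p ≠ none := by
      rcases hp with h | h | h | h <;> subst h
      · exact h01
      · rw [h00]; simp
      · exact h10
      · exact h1m1
    rcases hγp : γ p with _ | pl
    · exact absurd hγp hZocc
    refine ⟨pl, rfl, ?_⟩
    obtain ⟨-, hpty, -⟩ := hI.2.1 p pl hγp
    rw [hpty]
    rcases hp with h | h | h | h <;> subst h <;> decide
/-! ## The weak self-assembly statement -/

lemma wsys_singly : SinglySeeded WSys := by
  refine ⟨(0, 0), ?_⟩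
  ext p
  simp only [adom, Set.mem_setOf_eq, Set.mem_singleton_iff]
  show (wseed p ≠ none) ↔ _
  unfold wseed
  by_cases h : p = (0, 0)
  · simp [h]
  · simp [h]

lemma transform_marked (α : Assembly) (B : Finset TileType) :
    {p : ℤ × ℤ | ∃ pl, transform α rD (0, 0) p = some pl ∧ pl.1 ∈ B}
      = {p : ℤ × ℤ | ∃ pl, α p = some pl ∧ pl.1 ∈ B} := by
  ext p
  simp only [Set.mem_setOf_eq, transform]
  have h1 : Reflection.onPoint rD (p - (0, 0)) = p := by
    unfold Reflection.onPoint
    show ((p - (0,0)).1, (p - (0,0)).2) = p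
    have : p - (0, 0) = p := by
      ext <;> simp
    rw [this]
  rw [h1]
  constructor
  · rintro ⟨pl, hpl, hB⟩
    rcases hα : α p with _ | pl'
    · rw [hα] at hpl; exact absurd hpl (by simp [Option.map])
    · rw [hα] at hpl
      simp only [Option.map_some] at hpl
      obtain rfl : pl = (pl'.1, Reflection.comp rD pl'.2) := by injection hpl.symm
      exact ⟨pl', rfl, hB⟩
  · rintro ⟨pl, hpl, hB⟩
    rw [hpl]
    exact ⟨(pl.1, Reflection.comp rD pl.2), by simp, hB⟩

lemma wsys_weak : WeaklySelfAssembles WSys Zshape := by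
  refine ⟨markedB, by decide, ?_⟩
  intro α hT
  refine ⟨rD, (0, 0), ?_⟩
  rw [transform_marked α markedB]
  exact terminal_marked hT

lemma gridAdj_symm {p q : ℤ × ℤ} (h : GridAdj p q) : GridAdj q p := by
  unfold GridAdj at *
  omega

lemma zshape_isShape : IsShape Zshape := by
  refine ⟨?_, ⟨(0, 0), by simp [Zshape]⟩, ?_⟩
  · unfold Zshape
    exact (Set.finite_singleton _).insert _ |>.insert _ |>.insert _
  · -- connectivity
    set R := fun a b => GridAdj a b ∧ a ∈ Zshape ∧ b ∈ Zshape with hR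
    have m1 : ((0:ℤ), (1:ℤ)) ∈ Zshape := Or.inl rfl
    have m2 : ((0:ℤ), (0:ℤ)) ∈ Zshape := Or.inr (Or.inl rfl)
    have m3 : ((1:ℤ), (0:ℤ)) ∈ Zshape := Or.inr (Or.inr (Or.inl rfl))
    have m4 : ((1:ℤ), (-1:ℤ)) ∈ Zshape := Or.inr (Or.inr (Or.inr rfl))
    have e12 : R (0, 1) (0, 0) := ⟨by unfold GridAdj; norm_num, m1, m2⟩
    have e23 : R (0, 0) (1, 0) := ⟨by unfold GridAdj; norm_num, m2, m3⟩
    have e34 : R (1, 0) (1, -1) := ⟨by unfold GridAdj; norm_num, m3, m4⟩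
    have hto : ∀ p ∈ Zshape, Relation.ReflTransGen R (0, 0) p := by
      intro p hp
      rcases hp with h | h | h | h
      · rw [h]; exact Relation.ReflTransGen.single ⟨gridAdj_symm e12.1, m2, m1⟩
      · rw [h]
      · rw [h]; exact Relation.ReflTransGen.single e23
      · rw [h]
        exact Relation.ReflTransGen.tail (Relation.ReflTransGen.single e23) e34
    have hfrom : ∀ p ∈ Zshape, Relation.ReflTransGen R p (0, 0) := by
      intro p hp
      rcases hp with h | h | h | h
      · rw [h]; exact Relation.ReflTransGen.single e12
      · rw [h]
      · rw [h]; exact Relation.ReflTransGen.single ⟨gridAdj_symm e23.1, m3, m2⟩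
      · rw [h]
        exact Relation.ReflTransGen.tail
          (Relation.ReflTransGen.single ⟨gridAdj_symm e34.1, m4, m3⟩)
          ⟨gridAdj_symm e23.1, m3, m2⟩
    intro p hp q hq
    exact Relation.ReflTransGen.trans (hfrom p hp) (hto q hq)
/-! ## Negative side: infrastructure -/

def Zset (a b ε : ℤ) : Set (ℤ × ℤ) := {(a, b+1), (a, b), (a+ε, b), (a+ε, b-1)}

lemma mem_Zset_iff {a b ε : ℤ} {q : ℤ × ℤ} :
    q ∈ Zset a b ε ↔ (q.1 = a ∧ q.2 = b+1) ∨ (q.1 = a ∧ q.2 = b) ∨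
      (q.1 = a+ε ∧ q.2 = b) ∨ (q.1 = a+ε ∧ q.2 = b-1) := by
  simp [Zset, Set.mem_insert_iff, Set.mem_singleton_iff, Prod.ext_iff]

lemma stable_zero (α : Assembly) : Stable α 0 := by
  intro A _ _ _
  exact ⟨∅, by simp, by simp⟩

lemma onPoint_invol (r : Reflection) (q : ℤ × ℤ) :
    Reflection.onPoint r (Reflection.onPoint r q) = q := by
  rcases r with ⟨a, b⟩
  unfold Reflection.onPoint
  rcases a <;> rcases b <;> simp

/-- Characterization of the domain of an assembly that maps onto `Zshape`. -/
lemma dom_char {α : Assembly} {r : Reflection} {v : ℤ × ℤ}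
    (h : adom (transform α r v) = Zshape) :
    ∃ a b ε : ℤ, (ε = 1 ∨ ε = -1) ∧ (∀ q, α q ≠ none ↔ q ∈ Zset a b ε) := by
  have key : ∀ q : ℤ × ℤ, α q ≠ none ↔ (v + Reflection.onPoint r q) ∈ Zshape := by
    intro q
    have h1 : (v + Reflection.onPoint r q) ∈ adom (transform α r v) ↔ α q ≠ none := by
      simp only [adom, Set.mem_setOf_eq, transform]
      rw [add_sub_cancel_left, onPoint_invol]
      rcases α q with _ | pl <;> simp
    rw [← h1, h]
  rcases r with ⟨a0, b0⟩
  rcases a0 <;> rcases b0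
  · -- r = D
    refine ⟨-v.1, -v.2, 1, Or.inl rfl, ?_⟩
    intro q
    rw [key q, mem_Zset_iff]
    simp only [Zshape, Set.mem_insert_iff, Set.mem_singleton_iff, Prod.ext_iff,
      Reflection.onPoint, Prod.fst_add, Prod.snd_add]
    simp only [if_neg Bool.false_ne_true, Bool.false_eq_true, if_false]
    omega
  · -- r = V = (false, true)
    refine ⟨1 - v.1, v.2, -1, Or.inr rfl, ?_⟩
    intro q
    rw [key q, mem_Zset_iff]
    simp only [Zshape, Set.mem_insert_iff, Set.mem_singleton_iff, Prod.ext_iff,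
      Reflection.onPoint, Prod.fst_add, Prod.snd_add]
    simp only [Bool.false_eq_true, if_false, if_pos]
    omega
  · -- r = H = (true, false)
    refine ⟨v.1, -v.2, -1, Or.inr rfl, ?_⟩
    intro q
    rw [key q, mem_Zset_iff]
    simp only [Zshape, Set.mem_insert_iff, Set.mem_singleton_iff, Prod.ext_iff,
      Reflection.onPoint, Prod.fst_add, Prod.snd_add]
    simp only [Bool.false_eq_true, if_false, if_pos]
    omega
  · -- r = B
    refine ⟨v.1 - 1, v.2, 1, Or.inl rfl, ?_⟩
    intro q
    rw [key q, mem_Zset_iff]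
    simp only [Zshape, Set.mem_insert_iff, Set.mem_singleton_iff, Prod.ext_iff,
      Reflection.onPoint, Prod.fst_add, Prod.snd_add]
    simp only [if_pos]
    omega

/-- Two distinct cells of a `Z` with the same ordinate lie on its middle row. -/
lemma zset_pair {a b ε : ℤ} (hε : ε = 1 ∨ ε = -1) {u w : ℤ × ℤ}
    (hu : u ∈ Zset a b ε) (hw : w ∈ Zset a b ε) (hne : u ≠ w) (hy : u.2 = w.2) :
    u.2 = b := by
  rw [mem_Zset_iff] at hu hw
  have hne' : ¬ (u.1 = w.1 ∧ u.2 = w.2) := by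
    intro hc
    exact hne (Prod.ext hc.1 hc.2)
  omega

/-! ### Facing-glue evaluation -/

lemma facing_east (pl : Placement) {p q : ℤ × ℤ} (h : q.1 = p.1 + 1 ∧ q.2 = p.2) :
    facingGlue pl p q = TileType.east (TileType.reflect pl.1 pl.2) := by
  have hq : q = (p.1 + 1, p.2) := Prod.ext h.1 h.2
  unfold facingGlue
  rw [if_pos hq]

lemma facing_west (pl : Placement) {p q : ℤ × ℤ} (h : q.1 = p.1 - 1 ∧ q.2 = p.2) :
    facingGlue pl p q = TileType.west (TileType.reflect pl.1 pl.2) := by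
  have hq : q = (p.1 - 1, p.2) := Prod.ext h.1 h.2
  unfold facingGlue
  rw [if_neg (by rw [hq]; simp only [Prod.ext_iff]; omega), if_pos hq]

lemma facing_north (pl : Placement) {p q : ℤ × ℤ} (h : q.1 = p.1 ∧ q.2 = p.2 + 1) :
    facingGlue pl p q = TileType.north (TileType.reflect pl.1 pl.2) := by
  have hq : q = (p.1, p.2 + 1) := Prod.ext h.1 h.2
  unfold facingGlue
  rw [if_neg (by rw [hq]; simp only [Prod.ext_iff]; omega),
    if_neg (by rw [hq]; simp only [Prod.ext_iff]; omega), if_pos hq]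

lemma facing_south (pl : Placement) {p q : ℤ × ℤ} (h : q.1 = p.1 ∧ q.2 = p.2 - 1) :
    facingGlue pl p q = TileType.south (TileType.reflect pl.1 pl.2) := by
  have hq : q = (p.1, p.2 - 1) := Prod.ext h.1 h.2
  unfold facingGlue
  rw [if_neg (by rw [hq]; simp only [Prod.ext_iff]; omega),
    if_neg (by rw [hq]; simp only [Prod.ext_iff]; omega),
    if_neg (by rw [hq]; simp only [Prod.ext_iff]; omega), if_pos hq]

/-- Vertical flip of a placement. -/
def flipV (pl : Placement) : Placement := (pl.1, (pl.2.1, !pl.2.2))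

lemma reflect_flipV_north (pl : Placement) :
    TileType.north (TileType.reflect (flipV pl).1 (flipV pl).2)
      = TileType.south (TileType.reflect pl.1 pl.2) := by
  rcases pl with ⟨t, r1, r2⟩
  rcases r2 <;> rfl

lemma reflect_flipV_south (pl : Placement) :
    TileType.south (TileType.reflect (flipV pl).1 (flipV pl).2)
      = TileType.north (TileType.reflect pl.1 pl.2) := by
  rcases pl with ⟨t, r1, r2⟩
  rcases r2 <;> rfl

lemma reflect_flipV_east (pl : Placement) :
    TileType.east (TileType.reflect (flipV pl).1 (flipV pl).2)
      = TileType.east (TileType.reflect pl.1 pl.2) := by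
  rcases pl with ⟨t, r1, r2⟩
  rcases r2 <;> rfl

lemma reflect_flipV_west (pl : Placement) :
    TileType.west (TileType.reflect (flipV pl).1 (flipV pl).2)
      = TileType.west (TileType.reflect pl.1 pl.2) := by
  rcases pl with ⟨t, r1, r2⟩
  rcases r2 <;> rfl

/-- Flipping a tile vertically does not change a horizontal bond. -/
lemma bond_flip_horiz {δ δ' : Assembly} {p q : ℤ × ℤ} (h2 : p.2 = q.2) (h1 : p.1 ≠ q.1)
    (hp : δ' p = (δ p).map flipV) (hq : δ' q = δ q) :
    bondStrength δ' p q = bondStrength δ p q := by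
  have hfac : ∀ pl : Placement, facingGlue (flipV pl) p q = facingGlue pl p q := by
    intro pl
    by_cases he : q.1 = p.1 + 1 ∧ q.2 = p.2
    · rw [facing_east _ he, facing_east _ he, reflect_flipV_east]
    · by_cases hw : q.1 = p.1 - 1 ∧ q.2 = p.2
      · rw [facing_west _ hw, facing_west _ hw, reflect_flipV_west]
      · have hqn : q ∉ nbhdF p := by
          simp only [nbhdF, Finset.mem_insert, Finset.mem_singleton, Prod.ext_iff]
          push_neg
          constructor
          · intro hc; exact absurd ⟨hc, by omega⟩ he
          · constructor
            · intro hc; exact absurd ⟨hc, by omega⟩ hw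
            · omega
        rw [facingGlue_eq_none _ hqn, facingGlue_eq_none _ hqn]
  unfold bondStrength
  rcases hδp : δ p with _ | pl <;> rcases hδq : δ q with _ | plq <;>
    rw [hδp] at hp <;> rw [hδq] at hq <;> simp only [Option.map_some, Option.map_none] at hp <;>
    rw [hp, hq]
  show glueBind (facingGlue (flipV pl) p q) (facingGlue plq q p)
    = glueBind (facingGlue pl p q) (facingGlue plq q p)
  rw [hfac pl]

/-- A vertical bond mirrored across the row of the lower tile. -/
lemma bond_mirror_vert {δ δ' : Assembly} {c d : ℤ} {pu px : Placement}
    (hu : δ (c, d+1) = some pu) (hx : δ (c, d) = some px)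
    (hu' : δ' (c, d-1) = some (flipV pu)) (hx' : δ' (c, d) = some (flipV px)) :
    bondStrength δ' (c, d-1) (c, d) = bondStrength δ (c, d+1) (c, d) := by
  unfold bondStrength
  rw [hu, hx, hu', hx']
  have e1 : facingGlue (flipV pu) (c, d-1) (c, d)
      = facingGlue pu (c, d+1) (c, d) := by
    rw [facing_north _ (by constructor <;> simp <;> omega),
      facing_south _ (by constructor <;> simp <;> omega),
      reflect_flipV_north]
  have e2 : facingGlue (flipV px) (c, d) (c, d-1)
      = facingGlue px (c, d) (c, d+1) := by
    rw [facing_south _ (by constructor <;> simp <;> omega),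
      facing_north _ (by constructor <;> simp <;> omega),
      reflect_flipV_south]
  show glueBind (facingGlue (flipV pu) (c, d-1) (c, d)) (facingGlue (flipV px) (c, d) (c, d-1))
    = glueBind (facingGlue pu (c, d+1) (c, d)) (facingGlue px (c, d) (c, d+1))
  rw [e1, e2]

/-- Extraction of a single bond from a singleton cut. -/
lemma bond_extract {δ : Assembly} {τ : ℕ} (h : Stable δ τ) {u x : ℤ × ℤ}
    (hu : δ u ≠ none) (hc : ∃ y, δ y ≠ none ∧ y ≠ u)
    (hz : ∀ z ∈ nbhdF u, z ≠ x → bondStrength δ u z = 0) :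
    τ ≤ bondStrength δ u x := by
  obtain ⟨y, hy, hyu⟩ := hc
  have hcut := stable_singleton_cut h hu ⟨y, hy, by simpa using hyu⟩
  refine le_trans hcut ?_
  have hle : ∀ z ∈ nbhdF u, bondStrength δ u z ≤
      if z = x then bondStrength δ u x else 0 := by
    intro z hzn
    by_cases hzx : z = x
    · subst hzx; simp
    · rw [hz z hzn hzx, if_neg hzx]
  refine le_trans (Finset.sum_le_sum hle) ?_
  rw [Finset.sum_ite_eq' (nbhdF u) x (fun _ => bondStrength δ u x)]
  split <;> simp

lemma seq_chain {S : RTAS} {f : ℕ → Assembly} (hstep : StepSeq S f) (h0 : f 0 = S.seed) :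
    ∀ n, Relation.ReflTransGen (Attaches S) S.seed (f n) := by
  intro n
  induction n with
  | zero => rw [h0]
  | succ n ih =>
    rcases hstep n with he | ha
    · rw [he]; exact ih
    · exact Relation.ReflTransGen.tail ih ha

lemma mem_Zset_mk {a b ε x y : ℤ} :
    ((x, y) : ℤ × ℤ) ∈ Zset a b ε ↔ (x = a ∧ y = b+1) ∨ (x = a ∧ y = b) ∨
      (x = a+ε ∧ y = b) ∨ (x = a+ε ∧ y = b-1) := by
  simp [Zset, Set.mem_insert_iff, Set.mem_singleton_iff, Prod.ext_iff]

lemma mem_nbhdF_mk {x y c d : ℤ} :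
    ((x, y) : ℤ × ℤ) ∈ nbhdF (c, d) ↔ (x = c+1 ∧ y = d) ∨ (x = c-1 ∧ y = d) ∨
      (x = c ∧ y = d+1) ∨ (x = c ∧ y = d-1) := by
  simp [nbhdF, Prod.ext_iff]

/-- The mirror surgery for the case where the left middle cell was attached last:
flip it, and move the top cell to the mirrored position below. -/
def mirrC0 (a b : ℤ) (δ : Assembly) : Assembly := fun p =>
  if p = (a, b) then (δ (a, b)).map flipV
  else if p = (a, b+1) then none
  else if p = (a, b-1) then (δ (a, b+1)).map flipV
  else δ p

lemma mirrC0_at (a b : ℤ) (δ : Assembly) : mirrC0 a b δ (a, b) = (δ (a, b)).map flipV :=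
  if_pos rfl

lemma mirrC0_T (a b : ℤ) (δ : Assembly) : mirrC0 a b δ (a, b+1) = none := by
  unfold mirrC0
  rw [if_neg (by simp only [Prod.mk.injEq]; omega), if_pos rfl]

lemma mirrC0_Tm (a b : ℤ) (δ : Assembly) :
    mirrC0 a b δ (a, b-1) = (δ (a, b+1)).map flipV := by
  unfold mirrC0
  rw [if_neg (by simp only [Prod.mk.injEq]; omega),
    if_neg (by simp only [Prod.mk.injEq]; omega), if_pos rfl]

lemma mirrC0_other (a b : ℤ) (δ : Assembly) {p : ℤ × ℤ} (h1 : p ≠ (a, b))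
    (h2 : p ≠ (a, b+1)) (h3 : p ≠ (a, b-1)) : mirrC0 a b δ p = δ p := by
  unfold mirrC0
  rw [if_neg h1, if_neg h2, if_neg h3]

/-- The surgery for the case where the right middle cell was attached last:
flip it and erase the bottom cell. -/
def mirrC1 (c b : ℤ) (δ : Assembly) : Assembly := fun p =>
  if p = (c, b) then (δ (c, b)).map flipV
  else if p = (c, b-1) then none
  else δ p

lemma mirrC1_at (c b : ℤ) (δ : Assembly) : mirrC1 c b δ (c, b) = (δ (c, b)).map flipV :=
  if_pos rfl

lemma mirrC1_B (c b : ℤ) (δ : Assembly) : mirrC1 c b δ (c, b-1) = none := by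
  unfold mirrC1
  rw [if_neg (by simp only [Prod.mk.injEq]; omega), if_pos rfl]

lemma mirrC1_other (c b : ℤ) (δ : Assembly) {p : ℤ × ℤ} (h1 : p ≠ (c, b))
    (h2 : p ≠ (c, b-1)) : mirrC1 c b δ p = δ p := by
  unfold mirrC1
  rw [if_neg h1, if_neg h2]
/-! ## Negative side: the main argument -/

lemma flipV_flipV (pl : Placement) : flipV (flipV pl) = pl := by
  rcases pl with ⟨t, r1, r2⟩
  simp [flipV]

lemma not_strict : ¬ ∃ Sys : RTAS, SinglySeeded Sys ∧ StrictlySelfAssembles Sys Zshape := by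
  classical
  rintro ⟨Sys, hss, hstrict⟩
  obtain ⟨α, hTα, -⟩ := exists_terminal_ge Sys Sys.seed Relation.ReflTransGen.refl
  obtain ⟨r0, v0, hdom⟩ := hstrict α hTα
  obtain ⟨a, b, ε, hε, hiff⟩ := dom_char hdom
  obtain ⟨f, h0, hstepP, hlim⟩ := hTα.1
  have hstep : StepSeq Sys f := hstepP
  -- small geometric facts
  have hεne : ε ≠ 0 := by rcases hε with h | h <;> omega
  have hmemT : ((a, b+1) : ℤ × ℤ) ∈ Zset a b ε := by
    rw [mem_Zset_iff]; exact Or.inl ⟨rfl, rfl⟩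
  have hmemC0 : ((a, b) : ℤ × ℤ) ∈ Zset a b ε := by
    rw [mem_Zset_iff]; exact Or.inr (Or.inl ⟨rfl, rfl⟩)
  have hmemC1 : ((a+ε, b) : ℤ × ℤ) ∈ Zset a b ε := by
    rw [mem_Zset_iff]; exact Or.inr (Or.inr (Or.inl ⟨rfl, rfl⟩))
  have hmemB : ((a+ε, b-1) : ℤ × ℤ) ∈ Zset a b ε := by
    rw [mem_Zset_iff]; exact Or.inr (Or.inr (Or.inr ⟨rfl, rfl⟩))
  -- occupancy of the four cells of α
  have hαT : α (a, b+1) ≠ none := (hiff _).mpr hmemT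
  have hαC0 : α (a, b) ≠ none := (hiff _).mpr hmemC0
  have hαC1 : α (a+ε, b) ≠ none := (hiff _).mpr hmemC1
  have hαB : α (a+ε, b-1) ≠ none := (hiff _).mpr hmemB
  -- the case of an empty tile set
  by_cases htiles : Sys.tiles = ∅
  · have hfseed : ∀ n, f n = Sys.seed := by
      intro n
      induction n with
      | zero => exact h0
      | succ n ih =>
        rcases hstep n with he | ha
        · rw [he]; exact ih
        · obtain ⟨p, t, r, -, ht, -, -⟩ := ha
          rw [htiles] at ht
          exact absurd ht (Finset.notMem_empty t)
    obtain ⟨s, hs⟩ := hss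
    have hseedpt : ∀ p : ℤ × ℤ, α p ≠ none → p = s := by
      intro p hp
      rcases hαp : α p with _ | pl
      · exact absurd hαp hp
      obtain ⟨n, hn⟩ := (hlim p pl).1 hαp
      rw [hfseed n] at hn
      have : p ∈ adom Sys.seed := by rw [adom, Set.mem_setOf_eq, hn]; simp
      rw [hs] at this
      exact this
    have h1 := hseedpt _ hαT
    have h2 := hseedpt _ hαC0
    rw [← h2] at h1
    have := congrArg Prod.snd h1
    simp only [Prod.snd] at this
    omega
  -- zero temperature
  rcases Nat.eq_zero_or_pos Sys.temp with hτ0 | hτ1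
  · obtain ⟨t₀, ht₀⟩ := Finset.nonempty_iff_ne_empty.mpr htiles
    have hnone : α (a, b+2) = none := by
      rcases hv : α (a, b+2) with _ | pl
      · rfl
      · have hm : ((a, b+2) : ℤ × ℤ) ∈ Zset a b ε := (hiff _).mp (by rw [hv]; simp)
        rw [mem_Zset_mk] at hm
        omega
    exact hTα.2 (Function.update α (a, b+2) (some (t₀, rD)))
      ⟨(a, b+2), t₀, rD, hnone, ht₀, rfl, by rw [hτ0]; exact stable_zero _⟩
  -- main case
  -- a stage equal to α
  have hget : ∀ p : ℤ × ℤ, α p ≠ none → ∃ n pl, f n p = some pl ∧ α p = some pl := by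
    intro p hp
    rcases hαp : α p with _ | pl
    · exact absurd hαp hp
    obtain ⟨n, hn⟩ := (hlim p pl).1 hαp
    exact ⟨n, pl, hn, rfl⟩
  obtain ⟨n1, pl1, hn1, hα1⟩ := hget _ hαT
  obtain ⟨n2, pl2, hn2, hα2⟩ := hget _ hαC0
  obtain ⟨n3, pl3, hn3, hα3⟩ := hget _ hαC1
  obtain ⟨n4, pl4, hn4, hα4⟩ := hget _ hαB
  set N := max (max n1 n2) (max n3 n4) with hN
  have hfN : f N = α := by
    funext p
    rcases hαp : α p with _ | pl
    · rcases hfp : f N p with _ | pl'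
      · rfl
      · rw [(hlim p pl').2 ⟨N, hfp⟩] at hαp
        exact absurd hαp (by simp)
    · have hmem : p ∈ Zset a b ε := (hiff p).mp (by rw [hαp]; simp)
      have key : f N p = α p := by
        rcases hmem with h | h | h | h
        · rw [h, hα1]
          exact stepSeq_mono hstep (by omega) _ _ hn1
        · rw [h, hα2]
          exact stepSeq_mono hstep (by omega) _ _ hn2
        · rw [h, hα3]
          exact stepSeq_mono hstep (by omega) _ _ hn3
        · rw [h, hα4]
          exact stepSeq_mono hstep (by omega) _ _ hn4
      rw [key, hαp]
  have hstay : ∀ n, N ≤ n → f n = α := by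
    intro n hn
    induction n, hn using Nat.le_induction with
    | base => exact hfN
    | succ n hn ih =>
      rcases hstep n with he | ha
      · rw [he]; exact ih
      · rw [ih] at ha
        exact absurd ha (hTα.2 _)
  have hsubα : ∀ n p pl, f n p = some pl → α p = some pl := by
    intro n p pl h
    rcases le_total n N with hle | hge
    · rw [← hfN]
      exact stepSeq_mono hstep hle _ _ h
    · rw [← hstay n hge]; exact h
  have hs0 : ∀ n p, f n p ≠ none → p ∈ Zset a b ε := by
    intro n p hp
    rcases hfp : f n p with _ | pl
    · exact absurd hfp hp
    exact (hiff p).mp (by rw [hsubα n p pl hfp]; simp)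
  -- the first stage at which both middle cells are occupied
  have hexj : ∃ n, f n (a, b) ≠ none ∧ f n (a+ε, b) ≠ none := by
    refine ⟨N, ?_, ?_⟩ <;> rw [hfN]
    · exact hαC0
    · exact hαC1
  obtain ⟨j, ⟨hjC0, hjC1⟩, hjmin, hjN⟩ :
      ∃ j, (f j (a, b) ≠ none ∧ f j (a+ε, b) ≠ none) ∧
        (∀ m, m < j → ¬(f m (a, b) ≠ none ∧ f m (a+ε, b) ≠ none)) ∧ j ≤ N :=
    ⟨Nat.find hexj, Nat.find_spec hexj, fun m hm => Nat.find_min hexj hm,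
      Nat.find_min' hexj ⟨by rw [hfN]; exact hαC0, by rw [hfN]; exact hαC1⟩⟩
  have hjpos : j ≠ 0 := by
    intro hj0
    obtain ⟨s, hs⟩ := hss
    have h1 : ((a, b) : ℤ × ℤ) ∈ adom Sys.seed := by
      rw [adom, Set.mem_setOf_eq, ← h0, ← hj0]; exact hjC0
    have h2 : ((a+ε, b) : ℤ × ℤ) ∈ adom Sys.seed := by
      rw [adom, Set.mem_setOf_eq, ← h0, ← hj0]; exact hjC1
    rw [hs] at h1 h2
    rw [Set.mem_singleton_iff] at h1 h2
    rw [← h2] at h1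
    have := congrArg Prod.fst h1
    simp only [Prod.fst] at this
    omega
  obtain ⟨k, hk⟩ : ∃ k, j = k + 1 := ⟨j - 1, by omega⟩
  have hmink := hjmin k (by omega)
  rw [hk] at hjC0 hjC1 hjN
  have hatt : Attaches Sys (f k) (f (k+1)) := by
    rcases hstep k with he | ha
    · exfalso
      refine hmink ⟨?_, ?_⟩ <;> rw [← he]
      · exact hjC0
      · exact hjC1
    · exact ha
  obtain ⟨q, t, r, hqnone, htile, hupd, hstab⟩ := hatt
  have hqC : q = ((a, b) : ℤ × ℤ) ∨ q = ((a+ε, b) : ℤ × ℤ) := by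
    by_contra hq
    push_neg at hq
    refine hmink ⟨?_, ?_⟩
    · rw [show f k (a, b) = f (k+1) (a, b) from by
        rw [hupd, Function.update_of_ne (Ne.symm hq.1)]]
      exact hjC0
    · rw [show f k (a+ε, b) = f (k+1) (a+ε, b) from by
        rw [hupd, Function.update_of_ne (Ne.symm hq.2)]]
      exact hjC1
  -- distinctness and neighbourhood geometry
  have hd_TC0 : ((a, b+1) : ℤ × ℤ) ≠ (a, b) := by simp only [ne_eq, Prod.mk.injEq]; omega
  have hd_TC1 : ((a, b+1) : ℤ × ℤ) ≠ (a+ε, b) := by simp only [ne_eq, Prod.mk.injEq]; omega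
  have hd_TB : ((a, b+1) : ℤ × ℤ) ≠ (a+ε, b-1) := by simp only [ne_eq, Prod.mk.injEq]; omega
  have hd_C0C1 : ((a, b) : ℤ × ℤ) ≠ (a+ε, b) := by simp only [ne_eq, Prod.mk.injEq]; omega
  have hd_C0B : ((a, b) : ℤ × ℤ) ≠ (a+ε, b-1) := by simp only [ne_eq, Prod.mk.injEq]; omega
  have hd_C1B : ((a+ε, b) : ℤ × ℤ) ≠ (a+ε, b-1) := by simp only [ne_eq, Prod.mk.injEq]; omega
  have hnbT : ∀ z, z ∈ nbhdF (a, b+1) → z ∈ Zset a b ε → z = (a, b) := by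
    rintro ⟨z1, z2⟩ h1 h2
    rw [mem_nbhdF_mk] at h1
    rw [mem_Zset_mk] at h2
    simp only [Prod.mk.injEq]
    omega
  have hnbB : ∀ z, z ∈ nbhdF (a+ε, b-1) → z ∈ Zset a b ε → z = (a+ε, b) := by
    rintro ⟨z1, z2⟩ h1 h2
    rw [mem_nbhdF_mk] at h1
    rw [mem_Zset_mk] at h2
    simp only [Prod.mk.injEq]
    omega
  have hnbC0 : ∀ z, z ∈ nbhdF (a, b) → z ∈ Zset a b ε → z = (a, b+1) ∨ z = (a+ε, b) := by
    rintro ⟨z1, z2⟩ h1 h2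
    rw [mem_nbhdF_mk] at h1
    rw [mem_Zset_mk] at h2
    simp only [Prod.mk.injEq]
    omega
  have hnbC1 : ∀ z, z ∈ nbhdF (a+ε, b) → z ∈ Zset a b ε → z = (a, b) ∨ z = (a+ε, b-1) := by
    rintro ⟨z1, z2⟩ h1 h2
    rw [mem_nbhdF_mk] at h1
    rw [mem_Zset_mk] at h2
    simp only [Prod.mk.injEq]
    omega
  have hzero : ∀ (n : ℕ) (u x : ℤ × ℤ), (∀ z, z ∈ nbhdF u → z ∈ Zset a b ε → z = x) →
      ∀ z, z ∈ nbhdF u → z ≠ x → bondStrength (f n) u z = 0 := by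
    intro n u x huniq z hz hzx
    by_contra hb
    obtain ⟨-, hz2, -⟩ := pos_ne_of_bond (Nat.pos_of_ne_zero hb)
    exact hzx (huniq z hz (hs0 n z hz2))
  rcases hqC with hq | hq
  · -- Branch 1: the left middle cell (a, b) was attached after (a+ε, b)
    subst hq
    have hC1k : f k (a+ε, b) ≠ none := by
      rw [show f k (a+ε, b) = f (k+1) (a+ε, b) from by
        rw [hupd, Function.update_of_ne hd_C0C1.symm]]
      exact hjC1
    rcases hplC1 : f k (a+ε, b) with _ | plC1
    · exact absurd hplC1 hC1k
    have hfk1C0 : f (k+1) (a, b) = some (t, r) := by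
      rw [hupd, Function.update_self]
    have hfk1C1 : f (k+1) (a+ε, b) = some plC1 := by
      rw [hupd, Function.update_of_ne hd_C0C1.symm]; exact hplC1
    -- the top cell is empty at stage k
    have hkT : f k (a, b+1) = none := by
      rcases hv : f k (a, b+1) with _ | w
      · rfl
      exfalso
      have h1 : Sys.temp ≤ bondStrength (f k) (a, b+1) (a, b) := by
        refine bond_extract (stepSeq_stable hstep h0 k) (by rw [hv]; simp)
          ⟨(a+ε, b), hC1k, hd_TC1.symm⟩ (hzero k _ _ hnbT)
      rw [bondStrength_eq_zero_right hqnone] at h1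
      omega
    have hfk1T : f (k+1) (a, b+1) = none := by
      rw [hupd, Function.update_of_ne hd_TC0]; exact hkT
    -- the horizontal bond
    have hbondC : Sys.temp ≤ bondStrength (f (k+1)) (a, b) (a+ε, b) := by
      refine bond_extract hstab (by rw [hfk1C0]; simp)
        ⟨(a+ε, b), by rw [hfk1C1]; simp, hd_C0C1.symm⟩ ?_
      intro z hz hzx
      by_contra hb
      obtain ⟨-, hz2, -⟩ := pos_ne_of_bond (Nat.pos_of_ne_zero hb)
      rcases hnbC0 z hz (hs0 (k+1) z hz2) with h | h
      · rw [h, hfk1T] at hz2; exact hz2 rfl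
      · exact hzx h
    -- stability of the surgered stages
    have hphiStable : ∀ m, k+1 ≤ m → Stable (mirrC0 a b (f m)) Sys.temp := by
      intro m hm
      have hmC0 : f m (a, b) = some (t, r) := stepSeq_mono hstep hm _ _ hfk1C0
      have hmC1 : f m (a+ε, b) = some plC1 := stepSeq_mono hstep (by omega) _ _ hplC1
      have hoccm : ∀ p, mirrC0 a b (f m) p ≠ none → p = (a, b) ∨ p = (a+ε, b) ∨
          (p = (a, b-1) ∧ f m (a, b+1) ≠ none) ∨
          (p = (a+ε, b-1) ∧ f m (a+ε, b-1) ≠ none) := by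
        intro p hp
        by_cases h1 : p = (a, b)
        · exact Or.inl h1
        by_cases h2 : p = (a, b+1)
        · rw [h2, mirrC0_T] at hp; exact absurd rfl hp
        by_cases h3 : p = (a, b-1)
        · rw [h3, mirrC0_Tm] at hp
          refine Or.inr (Or.inr (Or.inl ⟨h3, ?_⟩))
          intro hc; rw [hc] at hp; exact hp rfl
        rw [mirrC0_other a b _ h1 h2 h3] at hp
        have := hs0 m p hp
        rw [mem_Zset_iff] at this
        have hp1 : p = (p.1, p.2) := rfl
        rcases this with h | h | h | h
        · exact absurd (by rw [hp1, h.1, h.2]) h2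
        · exact absurd (by rw [hp1, h.1, h.2]) h1
        · exact Or.inr (Or.inl (by rw [hp1, h.1, h.2]))
        · refine Or.inr (Or.inr (Or.inr ⟨by rw [hp1, h.1, h.2], ?_⟩))
          rw [← show p = (a+ε, b-1) from by rw [hp1, h.1, h.2]]
          exact hp
      have hmirC0 : mirrC0 a b (f m) (a, b) = some (flipV (t, r)) := by
        rw [mirrC0_at, hmC0]; rfl
      have hmirC1 : mirrC0 a b (f m) (a+ε, b) = some plC1 := by
        rw [mirrC0_other a b _ hd_C0C1.symm hd_TC1.symm]
        · exact hmC1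
        · simp only [ne_eq, Prod.mk.injEq]; omega
      have hbond1 : Sys.temp ≤ bondStrength (mirrC0 a b (f m)) (a, b) (a+ε, b) := by
        have heq : bondStrength (mirrC0 a b (f m)) (a, b) (a+ε, b)
            = bondStrength (f (k+1)) (a, b) (a+ε, b) := by
          refine bond_flip_horiz (show b = b from rfl) (show a ≠ a + ε by omega) ?_ ?_
          · rw [mirrC0_at, hmC0, hfk1C0]
          · rw [hmirC1, hfk1C1]
        rw [heq]; exact hbondC
      have hbond2 : f m (a, b+1) ≠ none →
          Sys.temp ≤ bondStrength (mirrC0 a b (f m)) (a, b-1) (a, b) := by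
        intro hT
        rcases hw : f m (a, b+1) with _ | w
        · exact absurd hw hT
        have hvm : Sys.temp ≤ bondStrength (f m) (a, b+1) (a, b) :=
          bond_extract (stepSeq_stable hstep h0 m) hT
            ⟨(a, b), by rw [hmC0]; simp, hd_TC0.symm⟩ (hzero m _ _ hnbT)
        have heq : bondStrength (mirrC0 a b (f m)) (a, b-1) (a, b)
            = bondStrength (f m) (a, b+1) (a, b) := by
          refine bond_mirror_vert hw hmC0 ?_ ?_
          · rw [mirrC0_Tm, hw]; rfl
          · rw [mirrC0_at, hmC0]; rfl
        rw [heq]; exact hvm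
      have hbond3 : f m (a+ε, b-1) ≠ none →
          Sys.temp ≤ bondStrength (mirrC0 a b (f m)) (a+ε, b-1) (a+ε, b) := by
        intro hB
        have hvm : Sys.temp ≤ bondStrength (f m) (a+ε, b-1) (a+ε, b) :=
          bond_extract (stepSeq_stable hstep h0 m) hB
            ⟨(a+ε, b), by rw [hmC1]; simp, hd_C1B⟩ (hzero m _ _ hnbB)
        have heq : bondStrength (mirrC0 a b (f m)) (a+ε, b-1) (a+ε, b)
            = bondStrength (f m) (a+ε, b-1) (a+ε, b) := by
          refine bondStrength_congr ?_ ?_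
          · rw [mirrC0_other a b _ hd_C0B.symm hd_TB.symm]
            simp only [ne_eq, Prod.mk.injEq]; omega
          · rw [hmirC1, hmC1]
        rw [heq]; exact hvm
      refine conn_stable ?_
      intro p hp q' hq'
      have hub : ∀ p, mirrC0 a b (f m) p ≠ none →
          Relation.ReflTransGen (fun x y => Sys.temp ≤ bondStrength (mirrC0 a b (f m)) x y ∧
            mirrC0 a b (f m) x ≠ none ∧ mirrC0 a b (f m) y ≠ none) p (a, b) ∧
          Relation.ReflTransGen (fun x y => Sys.temp ≤ bondStrength (mirrC0 a b (f m)) x y ∧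
            mirrC0 a b (f m) x ≠ none ∧ mirrC0 a b (f m) y ≠ none) (a, b) p := by
        intro p hp
        have hC0occ : mirrC0 a b (f m) (a, b) ≠ none := by rw [hmirC0]; simp
        have hC1occ : mirrC0 a b (f m) (a+ε, b) ≠ none := by rw [hmirC1]; simp
        rcases hoccm p hp with h | h | ⟨h, hT⟩ | ⟨h, hB⟩
        · subst h; exact ⟨Relation.ReflTransGen.refl, Relation.ReflTransGen.refl⟩
        · subst h
          constructor
          · refine Relation.ReflTransGen.single ⟨?_, hC1occ, hC0occ⟩
            rw [bondStrength_comm]; exact hbond1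
          · exact Relation.ReflTransGen.single ⟨hbond1, hC0occ, hC1occ⟩
        · subst h
          have hTmocc : mirrC0 a b (f m) (a, b-1) ≠ none := by
            rw [mirrC0_Tm]
            rcases hw : f m (a, b+1) with _ | w
            · exact absurd hw hT
            · simp
          constructor
          · exact Relation.ReflTransGen.single ⟨hbond2 hT, hTmocc, hC0occ⟩
          · refine Relation.ReflTransGen.single ⟨?_, hC0occ, hTmocc⟩
            rw [bondStrength_comm]; exact hbond2 hT
        · subst h
          have hBocc : mirrC0 a b (f m) (a+ε, b-1) ≠ none := by
            rw [mirrC0_other a b _ hd_C0B.symm hd_TB.symm]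
            · exact hB
            · simp only [ne_eq, Prod.mk.injEq]; omega
          constructor
          · refine Relation.ReflTransGen.head ⟨hbond3 hB, hBocc, hC1occ⟩ ?_
            refine Relation.ReflTransGen.single ⟨?_, hC1occ, hC0occ⟩
            rw [bondStrength_comm]; exact hbond1
          · refine Relation.ReflTransGen.head ⟨hbond1, hC0occ, hC1occ⟩ ?_
            refine Relation.ReflTransGen.single ⟨?_, hC1occ, hBocc⟩
            rw [bondStrength_comm]; exact hbond3 hB
      exact Relation.ReflTransGen.trans (hub p hp).1 (hub q' hq').2
    -- the surgered chain
    have hstep1 : Attaches Sys (f k) (mirrC0 a b (f (k+1))) := by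
      refine ⟨(a, b), t, (r.1, !r.2), hqnone, htile, ?_, hphiStable (k+1) le_rfl⟩
      funext p
      by_cases h1 : p = (a, b)
      · subst h1
        rw [mirrC0_at, hfk1C0, Function.update_self]; rfl
      by_cases h2 : p = (a, b+1)
      · subst h2
        rw [mirrC0_T, Function.update_of_ne hd_TC0, hkT]
      by_cases h3 : p = (a, b-1)
      · subst h3
        rw [mirrC0_Tm, hfk1T, Function.update_of_ne (by simp only [ne_eq, Prod.mk.injEq]; omega)]
        rcases hv : f k (a, b-1) with _ | w
        · rfl
        exfalso
        have := hs0 k _ (by rw [hv]; simp)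
        rw [mem_Zset_mk] at this
        omega
      · rw [mirrC0_other a b _ h1 h2 h3, hupd, Function.update_of_ne h1,
          Function.update_of_ne h1]
    have hsuf : ∀ m, k+1 ≤ m →
        Relation.ReflTransGen (Attaches Sys) Sys.seed (mirrC0 a b (f m)) := by
      intro m hm
      induction m, hm using Nat.le_induction with
      | base => exact (seq_chain hstep h0 k).tail hstep1
      | succ m hm ih =>
        have hmC0 : f m (a, b) = some (t, r) := stepSeq_mono hstep hm _ _ hfk1C0
        have hmC1 : f m (a+ε, b) = some plC1 := stepSeq_mono hstep (by omega) _ _ hplC1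
        rcases hstep m with he | ha
        · rw [he]; exact ih
        · obtain ⟨q', t', r', hq'none, ht', hupd', hstab'⟩ := ha
          have hq'Z : q' ∈ Zset a b ε := by
            refine hs0 (m+1) q' ?_
            rw [hupd', Function.update_self]; simp
          have hq'C0 : q' ≠ (a, b) := by
            intro hc; rw [hc, hmC0] at hq'none; exact absurd hq'none (by simp)
          have hq'C1 : q' ≠ (a+ε, b) := by
            intro hc; rw [hc, hmC1] at hq'none; exact absurd hq'none (by simp)
          rw [mem_Zset_iff] at hq'Z
          have hq'eta : q' = (q'.1, q'.2) := rfl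
          have hq'cases : q' = (a, b+1) ∨ q' = (a+ε, b-1) := by
            rcases hq'Z with h | h | h | h
            · exact Or.inl (by rw [hq'eta, h.1, h.2])
            · exact absurd (by rw [hq'eta, h.1, h.2]) hq'C0
            · exact absurd (by rw [hq'eta, h.1, h.2]) hq'C1
            · exact Or.inr (by rw [hq'eta, h.1, h.2])
          rcases hq'cases with hq' | hq'
          · -- the top cell: replay mirrored at (a, b-1)
            subst hq'
            refine ih.tail ⟨(a, b-1), t', (r'.1, !r'.2), ?_, ht', ?_, hphiStable (m+1) (by omega)⟩
            · rw [mirrC0_Tm, hq'none]; rfl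
            · funext p
              by_cases h1 : p = (a, b)
              · subst h1
                rw [mirrC0_at, Function.update_of_ne (by simp only [ne_eq, Prod.mk.injEq]; omega),
                  mirrC0_at, hupd', Function.update_of_ne hd_TC0.symm]
              by_cases h2 : p = (a, b+1)
              · subst h2
                rw [mirrC0_T, Function.update_of_ne (by simp only [ne_eq, Prod.mk.injEq]; omega),
                  mirrC0_T]
              by_cases h3 : p = (a, b-1)
              · subst h3
                rw [mirrC0_Tm, Function.update_self, hupd', Function.update_self]; rfl
              · rw [mirrC0_other a b _ h1 h2 h3, Function.update_of_ne h3,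
                  mirrC0_other a b _ h1 h2 h3, hupd', Function.update_of_ne h2]
          · -- the bottom cell: replay unchanged
            subst hq'
            refine ih.tail ⟨(a+ε, b-1), t', r', ?_, ht', ?_, hphiStable (m+1) (by omega)⟩
            · rw [mirrC0_other a b _ hd_C0B.symm hd_TB.symm
                (by simp only [ne_eq, Prod.mk.injEq]; omega)]
              exact hq'none
            · funext p
              by_cases h1 : p = (a, b)
              · subst h1
                rw [mirrC0_at, Function.update_of_ne hd_C0B, mirrC0_at, hupd',
                  Function.update_of_ne hd_C0B]
              by_cases h2 : p = (a, b+1)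
              · subst h2
                rw [mirrC0_T, Function.update_of_ne hd_TB, mirrC0_T]
              by_cases h3 : p = (a, b-1)
              · subst h3
                rw [mirrC0_Tm, Function.update_of_ne (by simp only [ne_eq, Prod.mk.injEq]; omega),
                  mirrC0_Tm, hupd', Function.update_of_ne hd_TB]
              by_cases h4 : p = (a+ε, b-1)
              · subst h4
                rw [mirrC0_other a b _ h1 h2 h3, Function.update_self, hupd',
                  Function.update_self]
              · rw [mirrC0_other a b _ h1 h2 h3, Function.update_of_ne h4,
                  mirrC0_other a b _ h1 h2 h3, hupd', Function.update_of_ne h4]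
    -- conclude branch 1
    have hRTG := hsuf N (by omega)
    rw [hfN] at hRTG
    obtain ⟨γ, hγT, hγge⟩ := exists_terminal_ge Sys _ hRTG
    obtain ⟨r1, v1, hdom1⟩ := hstrict γ hγT
    obtain ⟨a', b', ε', hε', hiff'⟩ := dom_char hdom1
    have hγC0 : γ (a, b) ≠ none := by
      rw [hγge (a, b) (flipV pl2) (by rw [mirrC0_at, hα2]; rfl)]; simp
    have hγC1 : γ (a+ε, b) ≠ none := by
      rw [hγge (a+ε, b) pl3 (by
        rw [mirrC0_other a b _ hd_C0C1.symm hd_TC1.symm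
          (by simp only [ne_eq, Prod.mk.injEq]; omega)]
        exact hα3)]
      simp
    have hγTm : γ (a, b-1) ≠ none := by
      rw [hγge (a, b-1) (flipV pl1) (by rw [mirrC0_Tm, hα1]; rfl)]; simp
    have hγB : γ (a+ε, b-1) ≠ none := by
      rw [hγge (a+ε, b-1) pl4 (by
        rw [mirrC0_other a b _ hd_C0B.symm hd_TB.symm
          (by simp only [ne_eq, Prod.mk.injEq]; omega)]
        exact hα4)]
      simp
    have hm1 := (hiff' _).mp hγC0
    have hm2 := (hiff' _).mp hγC1
    have hm3 := (hiff' _).mp hγTm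
    have hm4 := (hiff' _).mp hγB
    have hb1 : b = b' := by
      have := zset_pair hε' hm1 hm2 hd_C0C1 rfl
      simpa using this
    have hb2 : b - 1 = b' := by
      have := zset_pair hε' hm3 hm4 (by simp only [ne_eq, Prod.mk.injEq]; omega) rfl
      simpa using this
    omega
  · -- Branch 2: the right middle cell (a+ε, b) was attached after (a, b)
    subst hq
    have hC0k : f k (a, b) ≠ none := by
      rw [show f k (a, b) = f (k+1) (a, b) from by
        rw [hupd, Function.update_of_ne hd_C0C1]]
      exact hjC0
    rcases hplC0 : f k (a, b) with _ | plC0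
    · exact absurd hplC0 hC0k
    have hfk1C1 : f (k+1) (a+ε, b) = some (t, r) := by
      rw [hupd, Function.update_self]
    have hfk1C0 : f (k+1) (a, b) = some plC0 := by
      rw [hupd, Function.update_of_ne hd_C0C1]; exact hplC0
    have hkB : f k (a+ε, b-1) = none := by
      rcases hv : f k (a+ε, b-1) with _ | w
      · rfl
      exfalso
      have h1 : Sys.temp ≤ bondStrength (f k) (a+ε, b-1) (a+ε, b) := by
        refine bond_extract (stepSeq_stable hstep h0 k) (by rw [hv]; simp)
          ⟨(a, b), hC0k, hd_C0B⟩ (hzero k _ _ hnbB)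
      rw [bondStrength_eq_zero_right hqnone] at h1
      omega
    have hfk1B : f (k+1) (a+ε, b-1) = none := by
      rw [hupd, Function.update_of_ne hd_C1B.symm]; exact hkB
    have hbondC : Sys.temp ≤ bondStrength (f (k+1)) (a+ε, b) (a, b) := by
      refine bond_extract hstab (by rw [hfk1C1]; simp)
        ⟨(a, b), by rw [hfk1C0]; simp, hd_C0C1⟩ ?_
      intro z hz hzx
      by_contra hb0
      obtain ⟨-, hz2, -⟩ := pos_ne_of_bond (Nat.pos_of_ne_zero hb0)
      rcases hnbC1 z hz (hs0 (k+1) z hz2) with h | h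
      · exact hzx h
      · rw [h, hfk1B] at hz2; exact hz2 rfl
    have hphiStable : ∀ m, k+1 ≤ m → Stable (mirrC1 (a+ε) b (f m)) Sys.temp := by
      intro m hm
      have hmC1 : f m (a+ε, b) = some (t, r) := stepSeq_mono hstep hm _ _ hfk1C1
      have hmC0 : f m (a, b) = some plC0 := stepSeq_mono hstep (by omega) _ _ hplC0
      have hmirC1 : mirrC1 (a+ε) b (f m) (a+ε, b) = some (flipV (t, r)) := by
        rw [mirrC1_at, hmC1]; rfl
      have hmirC0 : mirrC1 (a+ε) b (f m) (a, b) = some plC0 := by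
        rw [mirrC1_other _ _ _ hd_C0C1 hd_C0B]; exact hmC0
      have hoccm : ∀ p, mirrC1 (a+ε) b (f m) p ≠ none → p = (a+ε, b) ∨ p = (a, b) ∨
          (p = (a, b+1) ∧ f m (a, b+1) ≠ none) := by
        intro p hp
        by_cases h1 : p = (a+ε, b)
        · exact Or.inl h1
        by_cases h2 : p = (a+ε, b-1)
        · rw [h2, mirrC1_B] at hp; exact absurd rfl hp
        rw [mirrC1_other _ _ _ h1 h2] at hp
        have := hs0 m p hp
        rw [mem_Zset_iff] at this
        have hp1 : p = (p.1, p.2) := rfl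
        rcases this with h | h | h | h
        · refine Or.inr (Or.inr ⟨by rw [hp1, h.1, h.2], ?_⟩)
          rw [← show p = (a, b+1) from by rw [hp1, h.1, h.2]]
          exact hp
        · exact Or.inr (Or.inl (by rw [hp1, h.1, h.2]))
        · exact absurd (by rw [hp1, h.1, h.2]) h1
        · exact absurd (by rw [hp1, h.1, h.2]) h2
      have hbond1 : Sys.temp ≤ bondStrength (mirrC1 (a+ε) b (f m)) (a+ε, b) (a, b) := by
        have heq : bondStrength (mirrC1 (a+ε) b (f m)) (a+ε, b) (a, b)
            = bondStrength (f (k+1)) (a+ε, b) (a, b) := by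
          refine bond_flip_horiz (show b = b from rfl) (show a + ε ≠ a by omega) ?_ ?_
          · rw [mirrC1_at, hmC1, hfk1C1]
          · rw [hmirC0, hfk1C0]
        rw [heq]; exact hbondC
      have hbond2 : f m (a, b+1) ≠ none →
          Sys.temp ≤ bondStrength (mirrC1 (a+ε) b (f m)) (a, b+1) (a, b) := by
        intro hT
        have hvm : Sys.temp ≤ bondStrength (f m) (a, b+1) (a, b) :=
          bond_extract (stepSeq_stable hstep h0 m) hT
            ⟨(a, b), by rw [hmC0]; simp, hd_TC0.symm⟩ (hzero m _ _ hnbT)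
        have heq : bondStrength (mirrC1 (a+ε) b (f m)) (a, b+1) (a, b)
            = bondStrength (f m) (a, b+1) (a, b) := by
          refine bondStrength_congr ?_ ?_
          · rw [mirrC1_other _ _ _ hd_TC1 hd_TB]
          · rw [hmirC0, hmC0]
        rw [heq]; exact hvm
      refine conn_stable ?_
      intro p hp q' hq'
      have hub : ∀ p, mirrC1 (a+ε) b (f m) p ≠ none →
          Relation.ReflTransGen (fun x y => Sys.temp ≤ bondStrength (mirrC1 (a+ε) b (f m)) x y ∧
            mirrC1 (a+ε) b (f m) x ≠ none ∧ mirrC1 (a+ε) b (f m) y ≠ none) p (a, b) ∧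
          Relation.ReflTransGen (fun x y => Sys.temp ≤ bondStrength (mirrC1 (a+ε) b (f m)) x y ∧
            mirrC1 (a+ε) b (f m) x ≠ none ∧ mirrC1 (a+ε) b (f m) y ≠ none) (a, b) p := by
        intro p hp
        have hC0occ : mirrC1 (a+ε) b (f m) (a, b) ≠ none := by rw [hmirC0]; simp
        have hC1occ : mirrC1 (a+ε) b (f m) (a+ε, b) ≠ none := by rw [hmirC1]; simp
        rcases hoccm p hp with h | h | ⟨h, hT⟩
        · subst h
          constructor
          · exact Relation.ReflTransGen.single ⟨hbond1, hC1occ, hC0occ⟩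
          · refine Relation.ReflTransGen.single ⟨?_, hC0occ, hC1occ⟩
            rw [bondStrength_comm]; exact hbond1
        · subst h; exact ⟨Relation.ReflTransGen.refl, Relation.ReflTransGen.refl⟩
        · subst h
          have hTocc : mirrC1 (a+ε) b (f m) (a, b+1) ≠ none := by
            rw [mirrC1_other _ _ _ hd_TC1 hd_TB]; exact hT
          constructor
          · exact Relation.ReflTransGen.single ⟨hbond2 hT, hTocc, hC0occ⟩
          · refine Relation.ReflTransGen.single ⟨?_, hC0occ, hTocc⟩
            rw [bondStrength_comm]; exact hbond2 hT
      exact Relation.ReflTransGen.trans (hub p hp).1 (hub q' hq').2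
    have hstep1 : Attaches Sys (f k) (mirrC1 (a+ε) b (f (k+1))) := by
      refine ⟨(a+ε, b), t, (r.1, !r.2), hqnone, htile, ?_, hphiStable (k+1) le_rfl⟩
      funext p
      by_cases h1 : p = (a+ε, b)
      · subst h1
        rw [mirrC1_at, hfk1C1, Function.update_self]; rfl
      by_cases h2 : p = (a+ε, b-1)
      · subst h2
        rw [mirrC1_B, Function.update_of_ne hd_C1B.symm, hkB]
      · rw [mirrC1_other _ _ _ h1 h2, hupd, Function.update_of_ne h1,
          Function.update_of_ne h1]
    have hsuf : ∀ m, k+1 ≤ m →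
        Relation.ReflTransGen (Attaches Sys) Sys.seed (mirrC1 (a+ε) b (f m)) := by
      intro m hm
      induction m, hm using Nat.le_induction with
      | base => exact (seq_chain hstep h0 k).tail hstep1
      | succ m hm ih =>
        have hmC1 : f m (a+ε, b) = some (t, r) := stepSeq_mono hstep hm _ _ hfk1C1
        have hmC0 : f m (a, b) = some plC0 := stepSeq_mono hstep (by omega) _ _ hplC0
        rcases hstep m with he | ha
        · rw [he]; exact ih
        · obtain ⟨q', t', r', hq'none, ht', hupd', hstab'⟩ := ha
          have hq'Z : q' ∈ Zset a b ε := by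
            refine hs0 (m+1) q' ?_
            rw [hupd', Function.update_self]; simp
          have hq'C0 : q' ≠ (a, b) := by
            intro hc; rw [hc, hmC0] at hq'none; exact absurd hq'none (by simp)
          have hq'C1 : q' ≠ (a+ε, b) := by
            intro hc; rw [hc, hmC1] at hq'none; exact absurd hq'none (by simp)
          rw [mem_Zset_iff] at hq'Z
          have hq'eta : q' = (q'.1, q'.2) := rfl
          have hq'cases : q' = (a, b+1) ∨ q' = (a+ε, b-1) := by
            rcases hq'Z with h | h | h | h
            · exact Or.inl (by rw [hq'eta, h.1, h.2])
            · exact absurd (by rw [hq'eta, h.1, h.2]) hq'C0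
            · exact absurd (by rw [hq'eta, h.1, h.2]) hq'C1
            · exact Or.inr (by rw [hq'eta, h.1, h.2])
          rcases hq'cases with hq' | hq'
          · -- the top cell: replay unchanged
            subst hq'
            refine ih.tail ⟨(a, b+1), t', r', ?_, ht', ?_, hphiStable (m+1) (by omega)⟩
            · rw [mirrC1_other _ _ _ hd_TC1 hd_TB]; exact hq'none
            · funext p
              by_cases h1 : p = (a+ε, b)
              · subst h1
                rw [mirrC1_at, Function.update_of_ne hd_TC1.symm, mirrC1_at, hupd',
                  Function.update_of_ne hd_TC1.symm]
              by_cases h2 : p = (a+ε, b-1)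
              · subst h2
                rw [mirrC1_B, Function.update_of_ne hd_TB.symm, mirrC1_B]
              by_cases h3 : p = (a, b+1)
              · subst h3
                rw [mirrC1_other _ _ _ h1 h2, Function.update_self, hupd',
                  Function.update_self]
              · rw [mirrC1_other _ _ _ h1 h2, Function.update_of_ne h3,
                  mirrC1_other _ _ _ h1 h2, hupd', Function.update_of_ne h3]
          · -- the bottom cell: skip this step
            subst hq'
            have hskip : mirrC1 (a+ε) b (f (m+1)) = mirrC1 (a+ε) b (f m) := by
              funext p
              by_cases h1 : p = (a+ε, b)
              · subst h1
                rw [mirrC1_at, mirrC1_at, hupd', Function.update_of_ne hd_C1B]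
              by_cases h2 : p = (a+ε, b-1)
              · subst h2
                rw [mirrC1_B, mirrC1_B]
              · rw [mirrC1_other _ _ _ h1 h2, mirrC1_other _ _ _ h1 h2, hupd',
                  Function.update_of_ne h2]
            rw [hskip]
            exact ih
    have hRTG := hsuf N (by omega)
    rw [hfN] at hRTG
    obtain ⟨γ, hγT, hγge⟩ := exists_terminal_ge Sys _ hRTG
    obtain ⟨r1, v1, hdom1⟩ := hstrict γ hγT
    obtain ⟨a', b', ε', hε', hiff'⟩ := dom_char hdom1
    have hαC1v : α (a+ε, b) = some (t, r) := hsubα (k+1) _ _ hfk1C1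
    have hγT' : γ (a, b+1) = some pl1 := by
      refine hγge (a, b+1) pl1 ?_
      rw [mirrC1_other _ _ _ hd_TC1 hd_TB]; exact hα1
    have hγC0 : γ (a, b) = some pl2 := by
      refine hγge (a, b) pl2 ?_
      rw [mirrC1_other _ _ _ hd_C0C1 hd_C0B]; exact hα2
    have hγC1 : γ (a+ε, b) = some (flipV (t, r)) := by
      refine hγge (a+ε, b) (flipV (t, r)) ?_
      rw [mirrC1_at, hαC1v]; rfl
    have hm1 := (hiff' _).mp (show γ (a, b+1) ≠ none from by rw [hγT']; simp)
    have hm2 := (hiff' _).mp (show γ (a, b) ≠ none from by rw [hγC0]; simp)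
    have hm3 := (hiff' _).mp (show γ (a+ε, b) ≠ none from by rw [hγC1]; simp)
    have hbb : b' = b := by
      have := zset_pair hε' hm2 hm3 hd_C0C1 rfl
      simp only at this
      omega
    have haa : a' = a := by
      rw [mem_Zset_mk] at hm1
      rcases hε' with h | h <;> omega
    have hεε : ε' = ε := by
      rw [mem_Zset_mk] at hm3
      rcases hε' with h | h <;> rcases hε with h2 | h2 <;> omega
    have hiffγ : ∀ q, γ q ≠ none ↔ q ∈ Zset a b ε := by
      intro q
      rw [hiff' q, haa, hbb, hεε]
    -- the fourth cell of γ
    have hγBocc : γ (a+ε, b-1) ≠ none := (hiffγ _).mpr hmemB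
    rcases hw : γ (a+ε, b-1) with _ | w
    · exact absurd hw hγBocc
    have hγstab : Stable γ Sys.temp := producible_stable hγT.1
    have hwbond : Sys.temp ≤ bondStrength γ (a+ε, b-1) (a+ε, b) := by
      refine bond_extract hγstab (by rw [hw]; simp)
        ⟨(a+ε, b), by rw [hγC1]; simp, hd_C1B⟩ ?_
      intro z hz hzx
      by_contra hb0
      obtain ⟨-, hz2, -⟩ := pos_ne_of_bond (Nat.pos_of_ne_zero hb0)
      exact hzx (hnbB z hz ((hiffγ z).mp hz2))
    -- attach the mirrored fourth tile above (a+ε, b) in α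
    have hPnone : α (a+ε, b+1) = none := by
      rcases hv : α (a+ε, b+1) with _ | u
      · rfl
      exfalso
      have := (hiff _).mp (by rw [hv]; simp)
      rw [mem_Zset_mk] at this
      omega
    have hδu : Function.update α (a+ε, b+1) (some (flipV w)) (a+ε, b+1) = some (flipV w) :=
      Function.update_self _ _ _
    have hδx : Function.update α (a+ε, b+1) (some (flipV w)) (a+ε, b) = some (t, r) := by
      rw [Function.update_of_ne (by simp only [ne_eq, Prod.mk.injEq]; omega)]
      exact hαC1v
    have hγBw : γ (a+ε, b-1) = some (flipV (flipV w)) := by rw [hw, flipV_flipV]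
    have hmb := bond_mirror_vert (δ := Function.update α (a+ε, b+1) (some (flipV w)))
      (δ' := γ) (c := a+ε) (d := b) hδu hδx hγBw hγC1
    refine hTα.2 (Function.update α (a+ε, b+1) (some (flipV w)))
      ⟨(a+ε, b+1), (flipV w).1, (flipV w).2, hPnone, ?_, rfl, ?_⟩
    · exact producible_tiles hγT.1 (a+ε, b-1) w hw
    · refine attach_ok (producible_stable hTα.1) hPnone {((a+ε, b+1), (a+ε, b))} ?_ ?_
      · intro e he
        rw [Finset.mem_singleton] at he
        subst he
        exact ⟨rfl, by rw [hαC1v]; simp⟩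
      · rw [Finset.sum_singleton, ← hmb]
        exact hwbond
/-- There is a finite connected shape that weakly self-assembles in some
singly seeded RTAM system but strictly self-assembles in no singly seeded RTAM system. -/
theorem rtam_exists_shape_weak_not_strict :
    ∃ S : Set (ℤ × ℤ), IsShape S ∧
      (∃ Sys : RTAS, SinglySeeded Sys ∧ WeaklySelfAssembles Sys S) ∧
      ¬ ∃ Sys : RTAS, SinglySeeded Sys ∧ StrictlySelfAssembles Sys S :=
  ⟨Zshape, zshape_isShape, ⟨WSys, wsys_singly, wsys_weak⟩, not_strict⟩
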